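/- arXiv:1207.6334 — 8 statements merged into one kernel-verified Lean document; each statement's English description precedes it below -/
import Mathlib

section
/- Let L ≥ 1 and let 𝒮 be the set of complex matrices M indexed by (Fin L ⊕ Fin L) × (Fin L ⊕ Fin L) satisfying: (i) M i (inl 0) = 0 for every index i; (ii) M (inr 0) j = 0 for every index j; (iii) for all m, n ∈ Fin L with m ≠ 0 and n ≠ 0: M (inr n) (inr m) = - M (inl m) (inl n), M (inl m) (inr n) = M (inl n) (inr m), and M (inr m) (inl n) = M (inr n) (inl m). Then 𝒮 is closed under the matrix commutator [X, Y] = XY - YX (and is a ℂ-linear subspace), i.e. 𝒮 is a Lie subalgebra of gl_{2L}(ℂ). -/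
open Matrix

/-- The set of matrices of the Lie algebra `𝔰_N` (N = 2L) of the paper: the column `inl 0`
and the row `inr 0` vanish, and on indices `m, n ≠ 0` the blocks form a copy of
`sp_{2L-2}` (an `A` block, its negative transpose, and two symmetric blocks `B`, `C`). -/
def sLie (L : ℕ) [NeZero L] : Set (Matrix (Fin L ⊕ Fin L) (Fin L ⊕ Fin L) ℂ) :=
  {M | (∀ i, M i (Sum.inl 0) = 0) ∧ (∀ j, M (Sum.inr 0) j = 0) ∧
    ∀ m n : Fin L, m ≠ 0 → n ≠ 0 →
      M (Sum.inr n) (Sum.inr m) = - M (Sum.inl m) (Sum.inl n) ∧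
      M (Sum.inl m) (Sum.inr n) = M (Sum.inl n) (Sum.inr m) ∧
      M (Sum.inr m) (Sum.inl n) = M (Sum.inr n) (Sum.inl m)}

private lemma hsum_neg {L : ℕ} (f g h k f' g' h' k' : Fin L → ℂ)
    (H : ∀ p, f p + g p - (h p + k p) + (f' p + g' p - (h' p + k' p)) = 0) :
    (∑ p, f p) + (∑ p, g p) - ((∑ p, h p) + (∑ p, k p)) =
      -((∑ p, f' p) + (∑ p, g' p) - ((∑ p, h' p) + (∑ p, k' p))) := by
  have h0 : ∑ p, (f p + g p - (h p + k p) + (f' p + g' p - (h' p + k' p))) = 0 :=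
    Finset.sum_eq_zero fun p _ => H p
  simp only [Finset.sum_add_distrib, Finset.sum_sub_distrib] at h0
  linear_combination h0

private lemma hsum_eq {L : ℕ} (f g h k f' g' h' k' : Fin L → ℂ)
    (H : ∀ p, f p + g p - (h p + k p) = f' p + g' p - (h' p + k' p)) :
    (∑ p, f p) + (∑ p, g p) - ((∑ p, h p) + (∑ p, k p)) =
      (∑ p, f' p) + (∑ p, g' p) - ((∑ p, h' p) + (∑ p, k' p)) := by
  have h0 : ∑ p, (f p + g p - (h p + k p)) = ∑ p, (f' p + g' p - (h' p + k' p)) :=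
    Finset.sum_congr rfl fun p _ => H p
  simp only [Finset.sum_add_distrib, Finset.sum_sub_distrib] at h0
  linear_combination h0

theorem sLie_is_lie_subalgebra (L : ℕ) [NeZero L] :
    (0 ∈ sLie L) ∧
    (∀ X ∈ sLie L, ∀ Y ∈ sLie L, X + Y ∈ sLie L) ∧
    (∀ c : ℂ, ∀ X ∈ sLie L, c • X ∈ sLie L) ∧
    (∀ X ∈ sLie L, ∀ Y ∈ sLie L, X * Y - Y * X ∈ sLie L) := by
  refine ⟨?_, ?_, ?_, ?_⟩
  · refine ⟨fun i => rfl, fun j => rfl, fun m n hm hn => ?_⟩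
    simp [Matrix.zero_apply]
  · rintro X ⟨hX1, hX2, hX3⟩ Y ⟨hY1, hY2, hY3⟩
    refine ⟨fun i => by simp [hX1, hY1], fun j => by simp [hX2, hY2], fun m n hm hn => ?_⟩
    obtain ⟨a1, b1, c1⟩ := hX3 m n hm hn
    obtain ⟨a2, b2, c2⟩ := hY3 m n hm hn
    refine ⟨?_, ?_, ?_⟩ <;> simp [a1, a2, b1, b2, c1, c2] <;> ring
  · rintro c X ⟨hX1, hX2, hX3⟩
    refine ⟨fun i => by simp [hX1], fun j => by simp [hX2], fun m n hm hn => ?_⟩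
    obtain ⟨a1, b1, c1⟩ := hX3 m n hm hn
    refine ⟨?_, ?_, ?_⟩ <;> simp [a1, b1, c1]
  · rintro X ⟨hX1, hX2, hX3⟩ Y ⟨hY1, hY2, hY3⟩
    refine ⟨fun i => ?_, fun j => ?_, fun m n hm hn => ?_⟩
    · simp [Matrix.sub_apply, Matrix.mul_apply, hY1, hX1]
    · simp [Matrix.sub_apply, Matrix.mul_apply, hX2, hY2]
    refine ⟨?_, ?_, ?_⟩
    · simp only [Matrix.sub_apply, Matrix.mul_apply, Fintype.sum_sum_type]
      apply hsum_neg
      intro p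
      by_cases hp : p = 0
      · subst hp; simp [hX1, hX2, hY1, hY2]
      · simp only [(hX3 p n hp hn).1, (hY3 m p hm hp).1, (hY3 p n hp hn).1,
          (hX3 m p hm hp).1, (hY3 p m hp hm).2.1, (hX3 p m hp hm).2.1,
          (hY3 p n hp hn).2.2, (hX3 p n hp hn).2.2]
        ring
    · simp only [Matrix.sub_apply, Matrix.mul_apply, Fintype.sum_sum_type]
      apply hsum_eq
      intro p
      by_cases hp : p = 0
      · subst hp; simp [hX1, hX2, hY1, hY2]
      · simp only [(hY3 n p hn hp).1, (hX3 n p hn hp).1, (hY3 m p hm hp).1,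
          (hX3 m p hm hp).1, (hY3 p n hp hn).2.1, (hX3 p n hp hn).2.1,
          (hY3 p m hp hm).2.1, (hX3 p m hp hm).2.1]
        ring
    · simp only [Matrix.sub_apply, Matrix.mul_apply, Fintype.sum_sum_type]
      apply hsum_eq
      intro p
      by_cases hp : p = 0
      · subst hp; simp [hX1, hX2, hY1, hY2]
      · simp only [(hX3 p m hp hm).1, (hY3 p m hp hm).1, (hX3 p n hp hn).1,
          (hY3 p n hp hn).1, (hX3 p n hp hn).2.2, (hY3 p n hp hn).2.2,
          (hX3 p m hp hm).2.2, (hY3 p m hp hm).2.2]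
        ring
end

section
/- Let L ≥ 1 and let 𝒮 be the ℂ-subspace of complex matrices M indexed by (Fin L ⊕ Fin L) × (Fin L ⊕ Fin L) satisfying: (i) M i (inl 0) = 0 for every index i; (ii) M (inr 0) j = 0 for every index j; (iii) for all m, n ∈ Fin L with m ≠ 0 and n ≠ 0: M (inr n) (inr m) = - M (inl m) (inl n), M (inl m) (inr n) = M (inl n) (inr m), and M (inr m) (inl n) = M (inr n) (inl m). Then the dimension of 𝒮 over ℂ equals 2L² + L - 2, i.e. (N-1)(N+2)/2 - 1 with N = 2L. -/
open Matrix

namespace SLieAux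

abbrev Tri (k : ℕ) := (i : Fin k) × Fin (i.val + 1)

abbrev Idx (k : ℕ) :=
  (Fin (k+1) × Fin k) ⊕ ((Fin (k+1) ⊕ (Fin k ⊕ Fin k)) ⊕ (Tri k ⊕ Tri k))

def symIdx {k : ℕ} (m n : Fin k) : Tri k :=
  if h : (m : ℕ) ≤ (n : ℕ) then ⟨n, ⟨m, Nat.lt_succ_of_le h⟩⟩
  else ⟨m, ⟨n, by omega⟩⟩

lemma symIdx_comm {k : ℕ} (m n : Fin k) : symIdx m n = symIdx n m := by
  unfold symIdx
  rcases lt_trichotomy (m : ℕ) (n : ℕ) with h | h | h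
  · rw [dif_pos h.le, dif_neg (by omega)]
  · have hmn : m = n := Fin.ext h
    subst hmn; rfl
  · rw [dif_neg (by omega), dif_pos h.le]

def low {k : ℕ} (t : Tri k) : Fin k :=
  ⟨t.2.val, lt_of_le_of_lt (Nat.le_of_lt_succ t.2.isLt) t.1.isLt⟩

lemma symIdx_low {k : ℕ} (t : Tri k) : symIdx (low t) t.1 = t := by
  unfold symIdx low
  rw [dif_pos (Nat.le_of_lt_succ t.2.isLt)]

lemma symIdx_cases {k : ℕ} (m n : Fin k) :
    (low (symIdx m n) = m ∧ (symIdx m n).1 = n) ∨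
    (low (symIdx m n) = n ∧ (symIdx m n).1 = m) := by
  by_cases h : (m : ℕ) ≤ (n : ℕ)
  · have e : symIdx m n = ⟨n, ⟨m, Nat.lt_succ_of_le h⟩⟩ := by unfold symIdx; rw [dif_pos h]
    rw [e]; exact Or.inl ⟨rfl, rfl⟩
  · have e : symIdx m n = ⟨m, ⟨n, by omega⟩⟩ := by unfold symIdx; rw [dif_neg h]
    rw [e]; exact Or.inr ⟨rfl, rfl⟩

lemma sym_app {k : ℕ} (f : Fin k → Fin k → ℂ) (hf : ∀ m n, f m n = f n m) (m n : Fin k) :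
    f (low (symIdx m n)) (symIdx m n).1 = f m n := by
  rcases symIdx_cases m n with ⟨e1, e2⟩ | ⟨e1, e2⟩ <;> rw [e1, e2]
  exact hf n m

set_option linter.unreachableTactic false in
set_option linter.unusedTactic false in
def phi (k : ℕ) : (Idx k → ℂ) →ₗ[ℂ]
    Matrix (Fin (k+1) ⊕ Fin (k+1)) (Fin (k+1) ⊕ Fin (k+1)) ℂ where
  toFun q := Matrix.of <| Sum.elim
    (fun m => Sum.elim
      (fun n => Fin.cases 0 (fun n' => q (.inl (m, n'))) n)
      (fun n => Fin.cases (q (.inr (.inl (.inl n))))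
        (fun m' => Fin.cases (q (.inr (.inl (.inr (.inl m')))))
          (fun n' => q (.inr (.inr (.inl (symIdx m' n'))))) n) m))
    (fun m => Sum.elim
      (fun n => Fin.cases 0
        (fun m' => Fin.cases 0
          (fun n' => q (.inr (.inr (.inr (symIdx m' n'))))) n) m)
      (fun n => Fin.cases 0
        (fun m' => Fin.cases (q (.inr (.inl (.inr (.inr m')))))
          (fun n' => - q (.inl (n'.succ, m'))) n) m))
  map_add' q r := by
    ext i j
    rcases i with m | m <;> rcases j with n | n <;>
      induction m using Fin.cases <;> induction n using Fin.cases <;>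
      simp only [Matrix.add_apply, Matrix.of_apply, Sum.elim_inl, Sum.elim_inr,
        Fin.cases_zero, Fin.cases_succ, Pi.add_apply, neg_add, add_zero] <;> ring
  map_smul' c q := by
    ext i j
    rcases i with m | m <;> rcases j with n | n <;>
      induction m using Fin.cases <;> induction n using Fin.cases <;>
      simp only [Matrix.smul_apply, Matrix.of_apply, Sum.elim_inl, Sum.elim_inr,
        Fin.cases_zero, Fin.cases_succ, Pi.smul_apply, smul_eq_mul, RingHom.id_apply,
        mul_zero, smul_zero, mul_neg] <;> ring

lemma phi_apply (k : ℕ) (q : Idx k → ℂ) : phi k q = Matrix.of (Sum.elim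
    (fun m => Sum.elim
      (fun n => Fin.cases 0 (fun n' => q (.inl (m, n'))) n)
      (fun n => Fin.cases (q (.inr (.inl (.inl n))))
        (fun m' => Fin.cases (q (.inr (.inl (.inr (.inl m')))))
          (fun n' => q (.inr (.inr (.inl (symIdx m' n'))))) n) m))
    (fun m => Sum.elim
      (fun n => Fin.cases 0
        (fun m' => Fin.cases 0
          (fun n' => q (.inr (.inr (.inr (symIdx m' n'))))) n) m)
      (fun n => Fin.cases 0
        (fun m' => Fin.cases (q (.inr (.inl (.inr (.inr m')))))
          (fun n' => - q (.inl (n'.succ, m'))) n) m))) := rfl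

lemma phi_mem (k : ℕ) (q : Idx k → ℂ) : phi k q ∈ sLie (k+1) := by
  refine ⟨?_, ?_, ?_⟩
  · rintro (m | m) <;> induction m using Fin.cases <;> simp [phi_apply]
  · rintro (n | n) <;> induction n using Fin.cases <;> simp [phi_apply]
  · intro m n hm hn
    obtain ⟨m', rfl⟩ : ∃ m', Fin.succ m' = m := ⟨m.pred hm, Fin.succ_pred m hm⟩
    obtain ⟨n', rfl⟩ : ∃ n', Fin.succ n' = n := ⟨n.pred hn, Fin.succ_pred n hn⟩
    refine ⟨?_, ?_, ?_⟩ <;> simp [phi_apply, symIdx_comm m' n']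

lemma phi_inj (k : ℕ) : Function.Injective (phi k) := by
  rw [injective_iff_map_eq_zero]
  intro q hq
  funext idx
  have h : ∀ i j, phi k q i j = 0 := fun i j => by rw [hq]; rfl
  rcases idx with ⟨m, n'⟩ | ((n | (m' | m')) | (⟨i, j⟩ | ⟨i, j⟩))
  · simpa [phi_apply] using h (Sum.inl m) (Sum.inl n'.succ)
  · simpa [phi_apply] using h (Sum.inl 0) (Sum.inr n)
  · simpa [phi_apply] using h (Sum.inl m'.succ) (Sum.inr 0)
  · simpa [phi_apply] using h (Sum.inr m'.succ) (Sum.inr 0)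
  · have := h (Sum.inl (Fin.succ (low ⟨i, j⟩))) (Sum.inr i.succ)
    simpa [phi_apply, symIdx_low (⟨i, j⟩ : Tri k)] using this
  · have := h (Sum.inr (Fin.succ (low ⟨i, j⟩))) (Sum.inl i.succ)
    simpa [phi_apply, symIdx_low (⟨i, j⟩ : Tri k)] using this

lemma mem_range_phi (k : ℕ) {M : Matrix (Fin (k+1) ⊕ Fin (k+1)) (Fin (k+1) ⊕ Fin (k+1)) ℂ}
    (hM : M ∈ sLie (k+1)) : M ∈ LinearMap.range (phi k) := by
  obtain ⟨h1, h2, h3⟩ := hM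
  refine ⟨fun idx => idx.elim (fun p => M (Sum.inl p.1) (Sum.inl p.2.succ)) (fun s => s.elim
      (fun v => v.elim (fun n => M (Sum.inl 0) (Sum.inr n))
        (fun w => w.elim (fun m' => M (Sum.inl m'.succ) (Sum.inr 0))
          (fun m' => M (Sum.inr m'.succ) (Sum.inr 0))))
      (fun t => t.elim
        (fun t => M (Sum.inl (Fin.succ (low t))) (Sum.inr t.1.succ))
        (fun t => M (Sum.inr (Fin.succ (low t))) (Sum.inl t.1.succ)))), ?_⟩
  ext i j
  rcases i with m | m <;> rcases j with n | n <;>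
    induction m using Fin.cases <;> induction n using Fin.cases <;>
    simp only [phi_apply, Matrix.of_apply, Sum.elim_inl, Sum.elim_inr,
      Fin.cases_zero, Fin.cases_succ] <;>
    first
      | rfl
      | exact sym_app (fun a b => M (Sum.inl a.succ) (Sum.inr b.succ))
          (fun a b => (h3 _ _ (Fin.succ_ne_zero _) (Fin.succ_ne_zero _)).2.1) _ _
      | exact sym_app (fun a b => M (Sum.inr a.succ) (Sum.inl b.succ))
          (fun a b => (h3 _ _ (Fin.succ_ne_zero _) (Fin.succ_ne_zero _)).2.2) _ _
      | exact ((h3 _ _ (Fin.succ_ne_zero _) (Fin.succ_ne_zero _)).1).symm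
      | (simp [h1, h2]; done)

lemma span_eq (k : ℕ) : Submodule.span ℂ (sLie (k+1)) = LinearMap.range (phi k) := by
  refine le_antisymm (Submodule.span_le.2 fun M hM => mem_range_phi k hM) ?_
  rintro _ ⟨q, rfl⟩
  exact Submodule.subset_span (phi_mem k q)

lemma card_tri (k : ℕ) : Fintype.card (Tri k) + Fintype.card (Tri k) = k * (k + 1) := by
  have h : Fintype.card (Tri k) = ∑ i ∈ Finset.range k, (i + 1) := by
    rw [Fintype.card_sigma]
    rw [Fin.sum_univ_eq_sum_range (fun i => Fintype.card (Fin (i + 1))) k]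
    simp
  have h2 : (∑ i ∈ Finset.range (k+1), i) = ∑ i ∈ Finset.range k, (i + 1) := by
    rw [Finset.sum_range_succ' (fun i => i) k]
    simp
  have h3 := Finset.sum_range_id_mul_two (k+1)
  simp only [Nat.add_sub_cancel] at h3
  have h4 : (k + 1) * k = k * (k + 1) := Nat.mul_comm _ _
  omega

end SLieAux

open SLieAux in
theorem sLie_finrank (L : ℕ) [NeZero L] :
    Module.finrank ℂ (Submodule.span ℂ (sLie L)) = 2 * L ^ 2 + L - 2 := by
  obtain ⟨k, rfl⟩ := Nat.exists_eq_succ_of_ne_zero (NeZero.ne L)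
  rw [span_eq, LinearMap.finrank_range_of_inj (phi_inj k),
    Module.finrank_fintype_fun_eq_card]
  have hc : Fintype.card (Idx k) =
      (k + 1) * k + ((k + 1) + (k + k)) + (Fintype.card (Tri k) + Fintype.card (Tri k)) := by
    simp [Idx, Fintype.card_sum, Fintype.card_prod]
    ring
  rw [hc, card_tri]
  have h5 : 2 * (k + 1) ^ 2 + (k + 1) =
      (k + 1) * k + ((k + 1) + (k + k)) + k * (k + 1) + 2 := by ring
  have h6 : 2 * Nat.succ k ^ 2 + Nat.succ k = 2 * (k + 1) ^ 2 + (k + 1) := rfl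
  omega
end

section
/- Let A be an associative unital ring, ι a finite index type with decidable equality, and c_i, c†_i, d_i, d†_i ∈ A (i ∈ ι) elements satisfying: c_i c†_j + c†_j c_i = δ_{ij}·1, d_i d†_j + d†_j d_i = δ_{ij}·1, and all other anticommutators among the elements c, c†, d, d† vanish (i.e. {c_i, c_j} = {c†_i, c†_j} = {d_i, d_j} = {d†_i, d†_j} = {c_i, d_j} = {c_i, d†_j} = {c†_i, d_j} = {c†_i, d†_j} = 0 for all i, j). Define e := ∑_{k ∈ ι} c†_k d_k and f := ∑_{k ∈ ι} d†_k c_k, and for m, n ∈ ι set A_{mn} := c†_m c_n + d†_m d_n, B_{mn} := c†_m d†_n + c†_n d†_m, C_{mn} := d_m c_n + d_n c_m. Then every A_{mn}, B_{mn}, and C_{mn} commutes with both e and f. -/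
/-- Commutator of two fermion bilinears in terms of anticommutators:
`[ab, xy] = a{b,x}y - {a,x}by + xa{b,y} - x{a,y}b`. -/
lemma comm4_aux {A : Type*} [Ring A] (a b x y : A) {α β γ δ : A}
    (h1 : b*x + x*b = α) (h2 : a*x + x*a = β)
    (h3 : b*y + y*b = γ) (h4 : a*y + y*a = δ) :
    a*b*(x*y) - x*y*(a*b) = a*α*y - β*(b*y) + x*(a*γ) - x*(δ*b) := by
  subst h1 h2 h3 h4
  noncomm_ring

/-- The `sp`-type fermion bilinears `A_{mn}`, `B_{mn}`, `C_{mn}` commute with the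
`sl(2)` generators `e = ∑ c†_k d_k` and `f = ∑ d†_k c_k`. -/
theorem sp_bilinears_commute_with_sl2 {A : Type*} [Ring A] {ι : Type*} [Fintype ι]
    [DecidableEq ι]
    (c cd d dd : ι → A)
    (hccd : ∀ i j, c i * cd j + cd j * c i = if i = j then 1 else 0)
    (hddd : ∀ i j, d i * dd j + dd j * d i = if i = j then 1 else 0)
    (hcc : ∀ i j, c i * c j + c j * c i = 0)
    (hcdcd : ∀ i j, cd i * cd j + cd j * cd i = 0)
    (hdd : ∀ i j, d i * d j + d j * d i = 0)
    (hdddd : ∀ i j, dd i * dd j + dd j * dd i = 0)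
    (hcd : ∀ i j, c i * d j + d j * c i = 0)
    (hcdd : ∀ i j, c i * dd j + dd j * c i = 0)
    (hcdd' : ∀ i j, cd i * d j + d j * cd i = 0)
    (hcddd : ∀ i j, cd i * dd j + dd j * cd i = 0) :
    ∀ m n : ι,
      ((cd m * c n + dd m * d n) * (∑ k, cd k * d k) =
        (∑ k, cd k * d k) * (cd m * c n + dd m * d n)) ∧
      ((cd m * c n + dd m * d n) * (∑ k, dd k * c k) =
        (∑ k, dd k * c k) * (cd m * c n + dd m * d n)) ∧
      ((cd m * dd n + cd n * dd m) * (∑ k, cd k * d k) =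
        (∑ k, cd k * d k) * (cd m * dd n + cd n * dd m)) ∧
      ((cd m * dd n + cd n * dd m) * (∑ k, dd k * c k) =
        (∑ k, dd k * c k) * (cd m * dd n + cd n * dd m)) ∧
      ((d m * c n + d n * c m) * (∑ k, cd k * d k) =
        (∑ k, cd k * d k) * (d m * c n + d n * c m)) ∧
      ((d m * c n + d n * c m) * (∑ k, dd k * c k) =
        (∑ k, dd k * c k) * (d m * c n + d n * c m)) := by
  intro m n
  refine ⟨?_, ?_, ?_, ?_, ?_, ?_⟩
  -- [A_{mn}, e] = 0
  · rw [← sub_eq_zero, Finset.mul_sum, Finset.sum_mul, ← Finset.sum_sub_distrib]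
    have key : ∀ k ∈ (Finset.univ : Finset ι),
        (cd m * c n + dd m * d n) * (cd k * d k) - cd k * d k * (cd m * c n + dd m * d n)
        = cd m * (if n = k then (1:A) else 0) * d k
          - cd k * ((if k = m then (1:A) else 0) * d n) := by
      intro k _
      have h1 := comm4_aux (cd m) (c n) (cd k) (d k)
        (hccd n k) (hcdcd m k) (hcd n k) (hcdd' m k)
      have h2 := comm4_aux (dd m) (d n) (cd k) (d k)
        (show d n * cd k + cd k * d n = (0:A) by rw [add_comm]; exact hcdd' k n)
        (show dd m * cd k + cd k * dd m = (0:A) by rw [add_comm]; exact hcddd k m)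
        (hdd n k)
        (show dd m * d k + d k * dd m = (if k = m then (1:A) else 0) by
          rw [add_comm]; exact hddd k m)
      linear_combination (norm := noncomm_ring) h1 + h2
    rw [Finset.sum_congr rfl key]
    simp [mul_ite, ite_mul, Finset.sum_sub_distrib]
  -- [A_{mn}, f] = 0
  · rw [← sub_eq_zero, Finset.mul_sum, Finset.sum_mul, ← Finset.sum_sub_distrib]
    have key : ∀ k ∈ (Finset.univ : Finset ι),
        (cd m * c n + dd m * d n) * (dd k * c k) - dd k * c k * (cd m * c n + dd m * d n)
        = dd m * (if n = k then (1:A) else 0) * c k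
          - dd k * ((if k = m then (1:A) else 0) * c n) := by
      intro k _
      have h1 := comm4_aux (cd m) (c n) (dd k) (c k)
        (hcdd n k) (hcddd m k) (hcc n k)
        (show cd m * c k + c k * cd m = (if k = m then (1:A) else 0) by
          rw [add_comm]; exact hccd k m)
      have h2 := comm4_aux (dd m) (d n) (dd k) (c k)
        (hddd n k) (hdddd m k)
        (show d n * c k + c k * d n = (0:A) by rw [add_comm]; exact hcd k n)
        (show dd m * c k + c k * dd m = (0:A) by rw [add_comm]; exact hcdd k m)
      linear_combination (norm := noncomm_ring) h1 + h2
    rw [Finset.sum_congr rfl key]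
    simp [mul_ite, ite_mul, Finset.sum_sub_distrib]
  -- [B_{mn}, e] = 0
  · rw [← sub_eq_zero, Finset.mul_sum, Finset.sum_mul, ← Finset.sum_sub_distrib]
    have key : ∀ k ∈ (Finset.univ : Finset ι),
        (cd m * dd n + cd n * dd m) * (cd k * d k) - cd k * d k * (cd m * dd n + cd n * dd m)
        = cd k * (cd m * (if k = n then (1:A) else 0))
          + cd k * (cd n * (if k = m then (1:A) else 0)) := by
      intro k _
      have h1 := comm4_aux (cd m) (dd n) (cd k) (d k)
        (show dd n * cd k + cd k * dd n = (0:A) by rw [add_comm]; exact hcddd k n)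
        (hcdcd m k)
        (show dd n * d k + d k * dd n = (if k = n then (1:A) else 0) by
          rw [add_comm]; exact hddd k n)
        (hcdd' m k)
      have h2 := comm4_aux (cd n) (dd m) (cd k) (d k)
        (show dd m * cd k + cd k * dd m = (0:A) by rw [add_comm]; exact hcddd k m)
        (hcdcd n k)
        (show dd m * d k + d k * dd m = (if k = m then (1:A) else 0) by
          rw [add_comm]; exact hddd k m)
        (hcdd' n k)
      linear_combination (norm := noncomm_ring) h1 + h2
    rw [Finset.sum_congr rfl key]
    simp only [mul_ite, ite_mul, mul_zero, zero_mul, mul_one, one_mul,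
      Finset.sum_add_distrib, Finset.sum_ite_eq', Finset.mem_univ, if_true]
    linear_combination (norm := noncomm_ring) hcdcd n m
  -- [B_{mn}, f] = 0
  · rw [← sub_eq_zero, Finset.mul_sum, Finset.sum_mul, ← Finset.sum_sub_distrib]
    have key : ∀ k ∈ (Finset.univ : Finset ι),
        (cd m * dd n + cd n * dd m) * (dd k * c k) - dd k * c k * (cd m * dd n + cd n * dd m)
        = -(dd k * ((if k = m then (1:A) else 0) * dd n))
          - dd k * ((if k = n then (1:A) else 0) * dd m) := by
      intro k _
      have h1 := comm4_aux (cd m) (dd n) (dd k) (c k)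
        (hdddd n k) (hcddd m k)
        (show dd n * c k + c k * dd n = (0:A) by rw [add_comm]; exact hcdd k n)
        (show cd m * c k + c k * cd m = (if k = m then (1:A) else 0) by
          rw [add_comm]; exact hccd k m)
      have h2 := comm4_aux (cd n) (dd m) (dd k) (c k)
        (hdddd m k) (hcddd n k)
        (show dd m * c k + c k * dd m = (0:A) by rw [add_comm]; exact hcdd k m)
        (show cd n * c k + c k * cd n = (if k = n then (1:A) else 0) by
          rw [add_comm]; exact hccd k n)
      linear_combination (norm := noncomm_ring) h1 + h2
    rw [Finset.sum_congr rfl key]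
    simp only [mul_ite, ite_mul, mul_zero, zero_mul, mul_one, one_mul,
      Finset.sum_sub_distrib, Finset.sum_neg_distrib, Finset.sum_ite_eq',
      Finset.mem_univ, if_true]
    linear_combination (norm := noncomm_ring) - hdddd m n
  -- [C_{mn}, e] = 0
  · rw [← sub_eq_zero, Finset.mul_sum, Finset.sum_mul, ← Finset.sum_sub_distrib]
    have key : ∀ k ∈ (Finset.univ : Finset ι),
        (d m * c n + d n * c m) * (cd k * d k) - cd k * d k * (d m * c n + d n * c m)
        = d m * (if n = k then (1:A) else 0) * d k
          + d n * (if m = k then (1:A) else 0) * d k := by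
      intro k _
      have h1 := comm4_aux (d m) (c n) (cd k) (d k)
        (hccd n k)
        (show d m * cd k + cd k * d m = (0:A) by rw [add_comm]; exact hcdd' k m)
        (hcd n k) (hdd m k)
      have h2 := comm4_aux (d n) (c m) (cd k) (d k)
        (hccd m k)
        (show d n * cd k + cd k * d n = (0:A) by rw [add_comm]; exact hcdd' k n)
        (hcd m k) (hdd n k)
      linear_combination (norm := noncomm_ring) h1 + h2
    rw [Finset.sum_congr rfl key]
    simp only [mul_ite, ite_mul, mul_zero, zero_mul, mul_one, one_mul,
      Finset.sum_add_distrib, Finset.sum_ite_eq, Finset.mem_univ, if_true]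
    linear_combination (norm := noncomm_ring) hdd m n
  -- [C_{mn}, f] = 0
  · rw [← sub_eq_zero, Finset.mul_sum, Finset.sum_mul, ← Finset.sum_sub_distrib]
    have key : ∀ k ∈ (Finset.univ : Finset ι),
        (d m * c n + d n * c m) * (dd k * c k) - dd k * c k * (d m * c n + d n * c m)
        = -((if m = k then (1:A) else 0) * (c n * c k))
          - (if n = k then (1:A) else 0) * (c m * c k) := by
      intro k _
      have h1 := comm4_aux (d m) (c n) (dd k) (c k)
        (hcdd n k) (hddd m k) (hcc n k)
        (show d m * c k + c k * d m = (0:A) by rw [add_comm]; exact hcd k m)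
      have h2 := comm4_aux (d n) (c m) (dd k) (c k)
        (hcdd m k) (hddd n k) (hcc m k)
        (show d n * c k + c k * d n = (0:A) by rw [add_comm]; exact hcd k n)
      linear_combination (norm := noncomm_ring) h1 + h2
    rw [Finset.sum_congr rfl key]
    simp only [mul_ite, ite_mul, mul_zero, zero_mul, mul_one, one_mul,
      Finset.sum_sub_distrib, Finset.sum_neg_distrib, Finset.sum_ite_eq,
      Finset.mem_univ, if_true]
    linear_combination (norm := noncomm_ring) - hcc n m
end

section
/- Let A be an associative unital ℂ-algebra containing symplectic fermion modes: families ψ¹_m, ψ²_m, ψ̄¹_m, ψ̄²_m ∈ A (m ∈ ℤ) satisfying, for all m, n ∈ ℤ and α, β ∈ {1,2}: ψ^α_m ψ^β_n + ψ^β_n ψ^α_m = m·J^{αβ}·δ_{m+n,0}·1, ψ̄^α_m ψ̄^β_n + ψ̄^β_n ψ̄^α_m = m·J^{αβ}·δ_{m+n,0}·1, and ψ^α_m ψ̄^β_n + ψ̄^β_n ψ^α_m = 0, where J^{12} = 1, J^{21} = -1, J^{11} = J^{22} = 0. Define S_{m,n} := ψ¹_m ψ̄²_n + ψ²_m ψ̄¹_n,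 T_{m,n} := ψ²_m ψ¹_n - ψ¹_m ψ²_n, T̄_{m,n} := ψ̄²_m ψ̄¹_n - ψ̄¹_m ψ̄²_n, and [a,b] := ab - ba. Then for all integers n, m, k, l: (1) [S_{n,m}, S_{k,l}] = l·δ_{l+m,0}·T_{n,k} + k·δ_{k+n,0}·T̄_{m,l} - 2kl·δ_{k+n,0}·δ_{l+m,0}·1; (2) [S_{m,n}, T_{k,l}] = m·(δ_{k+m,0}·S_{l,n} + δ_{m+l,0}·S_{k,n}); (3) [S_{m,n}, T̄_{k,l}] = n·(δ_{k+n,0}·S_{m,l} + δ_{n+l,0}·S_{m,k}); (4) [T_{m,n}, T_{k,l}] = n·(δ_{n+k,0}·T_{m,l} + δ_{n+l,0}·T_{m,k}) + m·(δ_{m+k,0}·T_{l,n} + δ_{m+l,0}·T_{k,n}); (5) [T̄_{m,n}, T̄_{k,l}] = n·(δ_{n+k,0}·T̄_{m,l} + δ_{n+l,0}·T̄_{m,k}) + m·(δ_{m+k,0}·T̄_{l,n} + δ_{m+l,0}·T̄_{k,n}); (6) [T_{m,n}, T̄_{k,l}] = 0. -/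
/-- Modes of the interchiral field: `S_{m,n} = ψ¹_m ψ̄²_n + ψ²_m ψ̄¹_n`
(`ψ 0` is `ψ¹` and `ψ 1` is `ψ²`). -/
def Smode {A : Type*} [Ring A] (ψ ψb : Fin 2 → ℤ → A) (m n : ℤ) : A :=
  ψ 0 m * ψb 1 n + ψ 1 m * ψb 0 n

/-- Chiral bilinears: `T_{m,n} = ψ²_m ψ¹_n - ψ¹_m ψ²_n`. -/
def Tmode {A : Type*} [Ring A] (ψ : Fin 2 → ℤ → A) (m n : ℤ) : A :=
  ψ 1 m * ψ 0 n - ψ 0 m * ψ 1 n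

/-- Commutator of two quadratic expressions in modes whose anticommutators are
central scalars. -/
lemma quad {A : Type*} [Ring A] [Algebra ℂ A] (a b c d : A) (sac sad sbc sbd : ℂ)
    (hac : a*c + c*a = sac • (1:A)) (had : a*d + d*a = sad • (1:A))
    (hbc : b*c + c*b = sbc • (1:A)) (hbd : b*d + d*b = sbd • (1:A)) :
    a*b*(c*d) - c*d*(a*b) =
      sbc • (a*d) - sac • (b*d) + sbd • (c*a) - sad • (c*b) := by
  have hbc' : b*c = sbc•(1:A) - c*b := eq_sub_of_add_eq hbc
  have hac' : a*c = sac•(1:A) - c*a := eq_sub_of_add_eq hac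
  have hbd' : b*d = sbd•(1:A) - d*b := eq_sub_of_add_eq hbd
  have had' : a*d = sad•(1:A) - d*a := eq_sub_of_add_eq had
  have e1 : a*b*(c*d) = sbc•(a*d) - a*c*(b*d) := by
    calc a*b*(c*d) = a*(b*c)*d := by noncomm_ring
    _ = sbc•(a*d) - a*c*(b*d) := by
        rw [hbc']; simp [mul_sub, sub_mul, mul_smul_comm, smul_mul_assoc, mul_assoc]
  have e2 : a*c*(b*d) = sac•(b*d) - c*a*(b*d) := by
    rw [hac']; simp [sub_mul, smul_mul_assoc]
  have e3 : c*a*(b*d) = sbd•(c*a) - c*(a*d)*b := by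
    rw [hbd']; simp [mul_sub, sub_mul, mul_smul_comm, smul_mul_assoc, mul_assoc]
  have e4 : c*(a*d)*b = sad•(c*b) - c*d*(a*b) := by
    rw [had']; simp [mul_sub, sub_mul, mul_smul_comm, smul_mul_assoc, mul_assoc]
  rw [e1, e2, e3, e4]; abel

theorem interchiral_commutation_relations
    {A : Type*} [Ring A] [Algebra ℂ A]
    (ψ ψb : Fin 2 → ℤ → A) (J : Fin 2 → Fin 2 → ℂ)
    (hJ11 : J 0 0 = 0) (hJ12 : J 0 1 = 1) (hJ21 : J 1 0 = -1) (hJ22 : J 1 1 = 0)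
    (hψψ : ∀ (α β : Fin 2) (m n : ℤ),
      ψ α m * ψ β n + ψ β n * ψ α m =
        ((m : ℂ) * J α β * (if m + n = 0 then 1 else 0)) • (1 : A))
    (hψbψb : ∀ (α β : Fin 2) (m n : ℤ),
      ψb α m * ψb β n + ψb β n * ψb α m =
        ((m : ℂ) * J α β * (if m + n = 0 then 1 else 0)) • (1 : A))
    (hmix : ∀ (α β : Fin 2) (m n : ℤ), ψ α m * ψb β n + ψb β n * ψ α m = 0) :
    ∀ n m k l : ℤ,
      (Smode ψ ψb n m * Smode ψ ψb k l - Smode ψ ψb k l * Smode ψ ψb n m =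
        ((l : ℂ) * (if l + m = 0 then 1 else 0)) • Tmode ψ n k +
        ((k : ℂ) * (if k + n = 0 then 1 else 0)) • Tmode ψb m l -
        ((2 * k * l : ℂ) * (if k + n = 0 then 1 else 0) *
          (if l + m = 0 then 1 else 0)) • (1 : A)) ∧
      (Smode ψ ψb m n * Tmode ψ k l - Tmode ψ k l * Smode ψ ψb m n =
        ((m : ℂ) * (if k + m = 0 then 1 else 0)) • Smode ψ ψb l n +
        ((m : ℂ) * (if m + l = 0 then 1 else 0)) • Smode ψ ψb k n) ∧
      (Smode ψ ψb m n * Tmode ψb k l - Tmode ψb k l * Smode ψ ψb m n =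
        ((n : ℂ) * (if k + n = 0 then 1 else 0)) • Smode ψ ψb m l +
        ((n : ℂ) * (if n + l = 0 then 1 else 0)) • Smode ψ ψb m k) ∧
      (Tmode ψ m n * Tmode ψ k l - Tmode ψ k l * Tmode ψ m n =
        ((n : ℂ) * (if n + k = 0 then 1 else 0)) • Tmode ψ m l +
        ((n : ℂ) * (if n + l = 0 then 1 else 0)) • Tmode ψ m k +
        ((m : ℂ) * (if m + k = 0 then 1 else 0)) • Tmode ψ l n +
        ((m : ℂ) * (if m + l = 0 then 1 else 0)) • Tmode ψ k n) ∧
      (Tmode ψb m n * Tmode ψb k l - Tmode ψb k l * Tmode ψb m n =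
        ((n : ℂ) * (if n + k = 0 then 1 else 0)) • Tmode ψb m l +
        ((n : ℂ) * (if n + l = 0 then 1 else 0)) • Tmode ψb m k +
        ((m : ℂ) * (if m + k = 0 then 1 else 0)) • Tmode ψb l n +
        ((m : ℂ) * (if m + l = 0 then 1 else 0)) • Tmode ψb k n) ∧
      (Tmode ψ m n * Tmode ψb k l - Tmode ψb k l * Tmode ψ m n = 0) := by
  intro n m k l
  have hmix0 : ∀ (α β : Fin 2) (m n : ℤ),
      ψ α m * ψb β n + ψb β n * ψ α m = (0:ℂ) • (1:A) := by
    simpa using hmix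
  have hmix0' : ∀ (α β : Fin 2) (m n : ℤ),
      ψb β n * ψ α m + ψ α m * ψb β n = (0:ℂ) • (1:A) := by
    intro α β m n; rw [add_comm]; exact hmix0 α β m n
  have hmixsw : ∀ (α β : Fin 2) (x y : ℤ),
      ψb β y * ψ α x = -(ψ α x * ψb β y) :=
    fun α β x y => eq_neg_of_add_eq_zero_right (hmix α β x y)
  have hsw : ∀ x y : ℤ, ψ 1 x * ψ 0 y =
      ((y:ℂ) * (if y + x = 0 then 1 else 0)) • (1:A) - ψ 0 y * ψ 1 x := by
    intro x y
    have h := hψψ 0 1 y x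
    rw [hJ12, mul_one] at h
    exact eq_sub_of_add_eq' h
  have hbsw : ∀ x y : ℤ, ψb 1 x * ψb 0 y =
      ((y:ℂ) * (if y + x = 0 then 1 else 0)) • (1:A) - ψb 0 y * ψb 1 x := by
    intro x y
    have h := hψbψb 0 1 y x
    rw [hJ12, mul_one] at h
    exact eq_sub_of_add_eq' h
  have cif : ∀ a b : ℤ,
      (if b + a = 0 then (1:ℂ) else 0) = (if a + b = 0 then (1:ℂ) else 0) := by
    intro a b; rw [add_comm b a]
  have expP : ∀ p q r s : A, (p+q)*(r+s) - (r+s)*(p+q) =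
      (p*r - r*p) + (p*s - s*p) + (q*r - r*q) + (q*s - s*q) := by
    intros; noncomm_ring
  have expPM : ∀ p q r s : A, (p+q)*(r-s) - (r-s)*(p+q) =
      (p*r - r*p) - (p*s - s*p) + (q*r - r*q) - (q*s - s*q) := by
    intros; noncomm_ring
  have expMM : ∀ p q r s : A, (p-q)*(r-s) - (r-s)*(p-q) =
      (p*r - r*p) - (p*s - s*p) - (q*r - r*q) + (q*s - s*q) := by
    intros; noncomm_ring
  refine ⟨?_, ?_, ?_, ?_, ?_, ?_⟩
  · -- [S_{n,m}, S_{k,l}]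
    have h11 := quad (ψ 0 n) (ψb 1 m) (ψ 0 k) (ψb 1 l) _ _ _ _
      (hψψ 0 0 n k) (hmix0 0 1 n l) (hmix0' 0 1 k m) (hψbψb 1 1 m l)
    have h12 := quad (ψ 0 n) (ψb 1 m) (ψ 1 k) (ψb 0 l) _ _ _ _
      (hψψ 0 1 n k) (hmix0 0 0 n l) (hmix0' 1 1 k m) (hψbψb 1 0 m l)
    have h21 := quad (ψ 1 n) (ψb 0 m) (ψ 0 k) (ψb 1 l) _ _ _ _
      (hψψ 1 0 n k) (hmix0 1 1 n l) (hmix0' 0 0 k m) (hψbψb 0 1 m l)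
    have h22 := quad (ψ 1 n) (ψb 0 m) (ψ 1 k) (ψb 0 l) _ _ _ _
      (hψψ 1 1 n k) (hmix0 1 0 n l) (hmix0' 1 0 k m) (hψbψb 0 0 m l)
    simp only [Smode, Tmode]
    rw [expP (ψ 0 n * ψb 1 m) (ψ 1 n * ψb 0 m) (ψ 0 k * ψb 1 l) (ψ 1 k * ψb 0 l),
      h11, h12, h21, h22]
    simp only [hJ11, hJ12, hJ21, hJ22, mul_zero, zero_mul, mul_one, mul_neg, neg_mul,
      zero_smul, smul_zero, add_zero, zero_add, sub_zero, zero_sub, neg_smul, neg_neg]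
    rw [hsw k n, hsw n k, hbsw m l]
    by_cases h1 : k + n = 0 <;> by_cases h2 : l + m = 0
    · have e1 : n + k = 0 := by omega
      have e2 : m + l = 0 := by omega
      have hn : n = -k := by omega
      have hm : m = -l := by omega
      subst hn hm
      simp only [if_pos h1, if_pos h2, if_pos e1, if_pos e2, mul_one]
      push_cast
      module
    · have e1 : n + k = 0 := by omega
      have e2 : ¬ (m + l = 0) := by omega
      have hn : n = -k := by omega
      subst hn
      simp only [if_pos h1, if_neg h2, if_pos e1, if_neg e2, mul_one, mul_zero,
        zero_smul, smul_zero, add_zero, zero_add, sub_zero, zero_sub, zero_mul]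
      push_cast
      module
    · have e1 : ¬ (n + k = 0) := by omega
      have e2 : m + l = 0 := by omega
      have hm : m = -l := by omega
      subst hm
      simp only [if_neg h1, if_pos h2, if_neg e1, if_pos e2, mul_one, mul_zero,
        zero_smul, smul_zero, add_zero, zero_add, sub_zero, zero_sub, zero_mul]
      push_cast
      module
    · have e1 : ¬ (n + k = 0) := by omega
      have e2 : ¬ (m + l = 0) := by omega
      simp only [if_neg h1, if_neg h2, if_neg e1, if_neg e2, mul_zero,
        zero_smul, smul_zero, add_zero, zero_add, sub_zero, zero_sub, zero_mul]
      abel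
  · -- [S_{m,n}, T_{k,l}]
    have hpr := quad (ψ 0 m) (ψb 1 n) (ψ 1 k) (ψ 0 l) _ _ _ _
      (hψψ 0 1 m k) (hψψ 0 0 m l) (hmix0' 1 1 k n) (hmix0' 0 1 l n)
    have hps := quad (ψ 0 m) (ψb 1 n) (ψ 0 k) (ψ 1 l) _ _ _ _
      (hψψ 0 0 m k) (hψψ 0 1 m l) (hmix0' 0 1 k n) (hmix0' 1 1 l n)
    have hqr := quad (ψ 1 m) (ψb 0 n) (ψ 1 k) (ψ 0 l) _ _ _ _
      (hψψ 1 1 m k) (hψψ 1 0 m l) (hmix0' 1 0 k n) (hmix0' 0 0 l n)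
    have hqs := quad (ψ 1 m) (ψb 0 n) (ψ 0 k) (ψ 1 l) _ _ _ _
      (hψψ 1 0 m k) (hψψ 1 1 m l) (hmix0' 0 0 k n) (hmix0' 1 0 l n)
    simp only [Smode, Tmode]
    rw [expPM (ψ 0 m * ψb 1 n) (ψ 1 m * ψb 0 n) (ψ 1 k * ψ 0 l) (ψ 0 k * ψ 1 l),
      hpr, hps, hqr, hqs]
    simp only [hJ11, hJ12, hJ21, hJ22, mul_zero, zero_mul, mul_one, mul_neg, neg_mul,
      zero_smul, smul_zero, add_zero, zero_add, sub_zero, zero_sub, neg_smul, neg_neg]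
    simp only [hmixsw, cif m k, smul_neg]
    module
  · -- [S_{m,n}, T̄_{k,l}]
    have hpr := quad (ψ 0 m) (ψb 1 n) (ψb 1 k) (ψb 0 l) _ _ _ _
      (hmix0 0 1 m k) (hmix0 0 0 m l) (hψbψb 1 1 n k) (hψbψb 1 0 n l)
    have hps := quad (ψ 0 m) (ψb 1 n) (ψb 0 k) (ψb 1 l) _ _ _ _
      (hmix0 0 0 m k) (hmix0 0 1 m l) (hψbψb 1 0 n k) (hψbψb 1 1 n l)
    have hqr := quad (ψ 1 m) (ψb 0 n) (ψb 1 k) (ψb 0 l) _ _ _ _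
      (hmix0 1 1 m k) (hmix0 1 0 m l) (hψbψb 0 1 n k) (hψbψb 0 0 n l)
    have hqs := quad (ψ 1 m) (ψb 0 n) (ψb 0 k) (ψb 1 l) _ _ _ _
      (hmix0 1 0 m k) (hmix0 1 1 m l) (hψbψb 0 0 n k) (hψbψb 0 1 n l)
    simp only [Smode, Tmode]
    rw [expPM (ψ 0 m * ψb 1 n) (ψ 1 m * ψb 0 n) (ψb 1 k * ψb 0 l) (ψb 0 k * ψb 1 l),
      hpr, hps, hqr, hqs]
    simp only [hJ11, hJ12, hJ21, hJ22, mul_zero, zero_mul, mul_one, mul_neg, neg_mul,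
      zero_smul, smul_zero, add_zero, zero_add, sub_zero, zero_sub, neg_smul, neg_neg]
    simp only [hmixsw, cif m n, cif k n, smul_neg]
    module
  · -- [T_{m,n}, T_{k,l}]
    have hpr := quad (ψ 1 m) (ψ 0 n) (ψ 1 k) (ψ 0 l) _ _ _ _
      (hψψ 1 1 m k) (hψψ 1 0 m l) (hψψ 0 1 n k) (hψψ 0 0 n l)
    have hps := quad (ψ 1 m) (ψ 0 n) (ψ 0 k) (ψ 1 l) _ _ _ _
      (hψψ 1 0 m k) (hψψ 1 1 m l) (hψψ 0 0 n k) (hψψ 0 1 n l)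
    have hqr := quad (ψ 0 m) (ψ 1 n) (ψ 1 k) (ψ 0 l) _ _ _ _
      (hψψ 0 1 m k) (hψψ 0 0 m l) (hψψ 1 1 n k) (hψψ 1 0 n l)
    have hqs := quad (ψ 0 m) (ψ 1 n) (ψ 0 k) (ψ 1 l) _ _ _ _
      (hψψ 0 0 m k) (hψψ 0 1 m l) (hψψ 1 0 n k) (hψψ 1 1 n l)
    simp only [Tmode]
    rw [expMM (ψ 1 m * ψ 0 n) (ψ 0 m * ψ 1 n) (ψ 1 k * ψ 0 l) (ψ 0 k * ψ 1 l),
      hpr, hps, hqr, hqs]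
    simp only [hJ11, hJ12, hJ21, hJ22, mul_zero, zero_mul, mul_one, mul_neg, neg_mul,
      zero_smul, smul_zero, add_zero, zero_add, sub_zero, zero_sub, neg_smul, neg_neg]
    simp only [hsw, cif m l, cif n l, cif m k, cif n k, smul_sub, smul_smul]
    by_cases h1 : m + k = 0 <;> by_cases h2 : n + l = 0
    · have hk : k = -m := by omega
      have hn : n = -l := by omega
      subst hk hn
      push_cast
      module
    · simp only [if_neg h2, mul_zero, zero_mul, zero_smul, smul_zero,
        add_zero, zero_add, sub_zero, zero_sub]
      module
    · simp only [if_neg h1, mul_zero, zero_mul, zero_smul, smul_zero,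
        add_zero, zero_add, sub_zero, zero_sub]
      module
    · simp only [if_neg h1, if_neg h2, mul_zero, zero_mul, zero_smul, smul_zero,
        add_zero, zero_add, sub_zero, zero_sub]
      module
  · -- [T̄_{m,n}, T̄_{k,l}]
    have hpr := quad (ψb 1 m) (ψb 0 n) (ψb 1 k) (ψb 0 l) _ _ _ _
      (hψbψb 1 1 m k) (hψbψb 1 0 m l) (hψbψb 0 1 n k) (hψbψb 0 0 n l)
    have hps := quad (ψb 1 m) (ψb 0 n) (ψb 0 k) (ψb 1 l) _ _ _ _
      (hψbψb 1 0 m k) (hψbψb 1 1 m l) (hψbψb 0 0 n k) (hψbψb 0 1 n l)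
    have hqr := quad (ψb 0 m) (ψb 1 n) (ψb 1 k) (ψb 0 l) _ _ _ _
      (hψbψb 0 1 m k) (hψbψb 0 0 m l) (hψbψb 1 1 n k) (hψbψb 1 0 n l)
    have hqs := quad (ψb 0 m) (ψb 1 n) (ψb 0 k) (ψb 1 l) _ _ _ _
      (hψbψb 0 0 m k) (hψbψb 0 1 m l) (hψbψb 1 0 n k) (hψbψb 1 1 n l)
    simp only [Tmode]
    rw [expMM (ψb 1 m * ψb 0 n) (ψb 0 m * ψb 1 n) (ψb 1 k * ψb 0 l) (ψb 0 k * ψb 1 l),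
      hpr, hps, hqr, hqs]
    simp only [hJ11, hJ12, hJ21, hJ22, mul_zero, zero_mul, mul_one, mul_neg, neg_mul,
      zero_smul, smul_zero, add_zero, zero_add, sub_zero, zero_sub, neg_smul, neg_neg]
    simp only [hbsw, cif m l, cif n l, cif m k, cif n k, smul_sub, smul_smul]
    by_cases h1 : m + k = 0 <;> by_cases h2 : n + l = 0
    · have hk : k = -m := by omega
      have hn : n = -l := by omega
      subst hk hn
      push_cast
      module
    · simp only [if_neg h2, mul_zero, zero_mul, zero_smul, smul_zero,
        add_zero, zero_add, sub_zero, zero_sub]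
      module
    · simp only [if_neg h1, mul_zero, zero_mul, zero_smul, smul_zero,
        add_zero, zero_add, sub_zero, zero_sub]
      module
    · simp only [if_neg h1, if_neg h2, mul_zero, zero_mul, zero_smul, smul_zero,
        add_zero, zero_add, sub_zero, zero_sub]
      module
  · -- [T_{m,n}, T̄_{k,l}]
    have hpr := quad (ψ 1 m) (ψ 0 n) (ψb 1 k) (ψb 0 l) _ _ _ _
      (hmix0 1 1 m k) (hmix0 1 0 m l) (hmix0 0 1 n k) (hmix0 0 0 n l)
    have hps := quad (ψ 1 m) (ψ 0 n) (ψb 0 k) (ψb 1 l) _ _ _ _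
      (hmix0 1 0 m k) (hmix0 1 1 m l) (hmix0 0 0 n k) (hmix0 0 1 n l)
    have hqr := quad (ψ 0 m) (ψ 1 n) (ψb 1 k) (ψb 0 l) _ _ _ _
      (hmix0 0 1 m k) (hmix0 0 0 m l) (hmix0 1 1 n k) (hmix0 1 0 n l)
    have hqs := quad (ψ 0 m) (ψ 1 n) (ψb 0 k) (ψb 1 l) _ _ _ _
      (hmix0 0 0 m k) (hmix0 0 1 m l) (hmix0 1 0 n k) (hmix0 1 1 n l)
    simp only [Tmode]
    rw [expMM (ψ 1 m * ψ 0 n) (ψ 0 m * ψ 1 n) (ψb 1 k * ψb 0 l) (ψb 0 k * ψb 1 l),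
      hpr, hps, hqr, hqs]
    simp only [zero_smul, smul_zero, add_zero, zero_add, sub_zero, zero_sub, neg_zero,
      sub_self]
end

section
/- Let A be an associative unital ℂ-algebra containing symplectic fermion modes: families ψ¹_m, ψ²_m, ψ̄¹_m, ψ̄²_m ∈ A (m ∈ ℤ) satisfying, for all m, n ∈ ℤ and α, β ∈ {1,2}: ψ^α_m ψ^β_n + ψ^β_n ψ^α_m = m·J^{αβ}·δ_{m+n,0}·1, ψ̄^α_m ψ̄^β_n + ψ̄^β_n ψ̄^α_m = m·J^{αβ}·δ_{m+n,0}·1, and ψ^α_m ψ̄^β_n + ψ̄^β_n ψ^α_m = 0, where J^{12} = 1, J^{21} = -1, J^{11} = J^{22} = 0. Define S_{m,n} := ψ¹_m ψ̄²_n + ψ²_m ψ̄¹_n, T_{m,n} := ψ²_m ψ¹_n - ψ¹_m ψ²_n, T̄_{m,n} := ψ̄²_m ψ̄¹_n - ψ̄¹_m ψ̄²_n. Then the ℂ-linear span of the set {1} ∪ {S_{m,n} : m,n ∈ ℤ} ∪ {T_{m,n} : m,n ∈ ℤ} ∪ {T̄_{m,n} : m,n ∈ ℤ} is closed under the commutator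 [a,b] = ab - ba; i.e. it is a Lie subalgebra of A. -/
section Aux
variable {A : Type*} [Ring A] [Algebra ℂ A]

lemma comm4 (a b c d : A) {sac sad sbc sbd : ℂ}
    (hac : a*c + c*a = sac • (1:A)) (had : a*d + d*a = sad • (1:A))
    (hbc : b*c + c*b = sbc • (1:A)) (hbd : b*d + d*b = sbd • (1:A)) :
    a*b*(c*d) - c*d*(a*b)
      = sbc • (a*d) - sac • (b*d) + sbd • (c*a) - sad • (c*b) := by
  have key : a*b*(c*d) - c*d*(a*b)
      = a*((b*c + c*b)*d) - (a*c + c*a)*(b*d) + c*a*(b*d + d*b) - c*((a*d + d*a)*b) := by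
    noncomm_ring
  rw [key, hac, hbc, hbd, had]
  simp only [smul_mul_assoc, mul_smul_comm, one_mul, mul_one]

variable (ψ ψb : Fin 2 → ℤ → A) (J : Fin 2 → Fin 2 → ℂ)
    (hJ11 : J 0 0 = 0) (hJ12 : J 0 1 = 1) (hJ21 : J 1 0 = -1) (hJ22 : J 1 1 = 0)

include hJ11 hJ12 hJ21 hJ22 in
/-- `[T_{m,n}, T_{p,q}]` for a single chiral family. -/
lemma commTT (φ : Fin 2 → ℤ → A)
    (hφ : ∀ (α β : Fin 2) (m n : ℤ),
      φ α m * φ β n + φ β n * φ α m =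
        ((m : ℂ) * J α β * (if m + n = 0 then 1 else 0)) • (1 : A))
    (m n p q : ℤ) :
    Tmode φ m n * Tmode φ p q - Tmode φ p q * Tmode φ m n
      = ((n:ℂ) * (if n + p = 0 then 1 else 0)) • Tmode φ m q
      + ((m:ℂ) * (if m + q = 0 then 1 else 0)) • Tmode φ p n
      + ((m:ℂ) * (if m + p = 0 then 1 else 0)) • Tmode φ n q
      + ((n:ℂ) * (if n + q = 0 then 1 else 0)) • Tmode φ p m := by
  have h1 := comm4 (φ 1 m) (φ 0 n) (φ 1 p) (φ 0 q)
    (hφ 1 1 m p) (hφ 1 0 m q) (hφ 0 1 n p) (hφ 0 0 n q)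
  have h2 := comm4 (φ 1 m) (φ 0 n) (φ 0 p) (φ 1 q)
    (hφ 1 0 m p) (hφ 1 1 m q) (hφ 0 0 n p) (hφ 0 1 n q)
  have h3 := comm4 (φ 0 m) (φ 1 n) (φ 1 p) (φ 0 q)
    (hφ 0 1 m p) (hφ 0 0 m q) (hφ 1 1 n p) (hφ 1 0 n q)
  have h4 := comm4 (φ 0 m) (φ 1 n) (φ 0 p) (φ 1 q)
    (hφ 0 0 m p) (hφ 0 1 m q) (hφ 1 0 n p) (hφ 1 1 n q)
  have expand : Tmode φ m n * Tmode φ p q - Tmode φ p q * Tmode φ m n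
      = (φ 1 m*φ 0 n*(φ 1 p*φ 0 q) - φ 1 p*φ 0 q*(φ 1 m*φ 0 n))
      - (φ 1 m*φ 0 n*(φ 0 p*φ 1 q) - φ 0 p*φ 1 q*(φ 1 m*φ 0 n))
      - (φ 0 m*φ 1 n*(φ 1 p*φ 0 q) - φ 1 p*φ 0 q*(φ 0 m*φ 1 n))
      + (φ 0 m*φ 1 n*(φ 0 p*φ 1 q) - φ 0 p*φ 1 q*(φ 0 m*φ 1 n)) := by
    simp only [Tmode]; noncomm_ring
  rw [expand, h1, h2, h3, h4]
  simp only [Tmode, hJ11, hJ12, hJ21, hJ22]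
  module

variable
    (hψψ : ∀ (α β : Fin 2) (m n : ℤ),
      ψ α m * ψ β n + ψ β n * ψ α m =
        ((m : ℂ) * J α β * (if m + n = 0 then 1 else 0)) • (1 : A))
    (hψbψb : ∀ (α β : Fin 2) (m n : ℤ),
      ψb α m * ψb β n + ψb β n * ψb α m =
        ((m : ℂ) * J α β * (if m + n = 0 then 1 else 0)) • (1 : A))
    (hmix : ∀ (α β : Fin 2) (m n : ℤ), ψ α m * ψb β n + ψb β n * ψ α m = 0)

set_option linter.unusedSectionVars false in
include hmix in
lemma hmix' : ∀ (α β : Fin 2) (m n : ℤ),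
    ψ α m * ψb β n + ψb β n * ψ α m = (0:ℂ) • (1:A) := by
  intro α β m n; rw [hmix]; simp

set_option linter.unusedSectionVars false in
include hmix in
lemma hmix'' : ∀ (α β : Fin 2) (m n : ℤ),
    ψb β n * ψ α m + ψ α m * ψb β n = (0:ℂ) • (1:A) := by
  intro α β m n; rw [add_comm, hmix]; simp

set_option linter.unusedSectionVars false in
include hmix in
lemma hflip : ∀ (α β : Fin 2) (m n : ℤ),
    ψb β n * ψ α m = -(ψ α m * ψb β n) :=
  fun α β m n => eq_neg_of_add_eq_zero_right (hmix α β m n)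

include hJ11 hJ12 hJ21 hJ22 hψψ hψbψb hmix in
lemma commSS (m n p q : ℤ) :
    Smode ψ ψb m n * Smode ψ ψb p q - Smode ψ ψb p q * Smode ψ ψb m n
      = (-(m:ℂ) * (if m + p = 0 then 1 else 0)) • Tmode ψb n q
      + (-(n:ℂ) * (if n + q = 0 then 1 else 0)) • Tmode ψ p m := by
  have hm' := hmix' ψ ψb hmix
  have hm'' := hmix'' ψ ψb hmix
  have h1 := comm4 (ψ 0 m) (ψb 1 n) (ψ 0 p) (ψb 1 q)
    (hψψ 0 0 m p) (hm' 0 1 m q) (hm'' 0 1 p n) (hψbψb 1 1 n q)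
  have h2 := comm4 (ψ 0 m) (ψb 1 n) (ψ 1 p) (ψb 0 q)
    (hψψ 0 1 m p) (hm' 0 0 m q) (hm'' 1 1 p n) (hψbψb 1 0 n q)
  have h3 := comm4 (ψ 1 m) (ψb 0 n) (ψ 0 p) (ψb 1 q)
    (hψψ 1 0 m p) (hm' 1 1 m q) (hm'' 0 0 p n) (hψbψb 0 1 n q)
  have h4 := comm4 (ψ 1 m) (ψb 0 n) (ψ 1 p) (ψb 0 q)
    (hψψ 1 1 m p) (hm' 1 0 m q) (hm'' 1 0 p n) (hψbψb 0 0 n q)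
  have expand : Smode ψ ψb m n * Smode ψ ψb p q - Smode ψ ψb p q * Smode ψ ψb m n
      = (ψ 0 m*ψb 1 n*(ψ 0 p*ψb 1 q) - ψ 0 p*ψb 1 q*(ψ 0 m*ψb 1 n))
      + (ψ 0 m*ψb 1 n*(ψ 1 p*ψb 0 q) - ψ 1 p*ψb 0 q*(ψ 0 m*ψb 1 n))
      + (ψ 1 m*ψb 0 n*(ψ 0 p*ψb 1 q) - ψ 0 p*ψb 1 q*(ψ 1 m*ψb 0 n))
      + (ψ 1 m*ψb 0 n*(ψ 1 p*ψb 0 q) - ψ 1 p*ψb 0 q*(ψ 1 m*ψb 0 n)) := by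
    simp only [Smode]; noncomm_ring
  rw [expand, h1, h2, h3, h4]
  simp only [Tmode, hJ11, hJ12, hJ21, hJ22]
  module

include hJ11 hJ12 hJ21 hJ22 hψψ hmix in
lemma commST (m n p q : ℤ) :
    Smode ψ ψb m n * Tmode ψ p q - Tmode ψ p q * Smode ψ ψb m n
      = ((m:ℂ) * (if m + p = 0 then 1 else 0)) • Smode ψ ψb q n
      + ((m:ℂ) * (if m + q = 0 then 1 else 0)) • Smode ψ ψb p n := by
  have hm'' := hmix'' ψ ψb hmix
  have hfl := hflip ψ ψb hmix
  have h1 := comm4 (ψ 0 m) (ψb 1 n) (ψ 1 p) (ψ 0 q)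
    (hψψ 0 1 m p) (hψψ 0 0 m q) (hm'' 1 1 p n) (hm'' 0 1 q n)
  have h2 := comm4 (ψ 0 m) (ψb 1 n) (ψ 0 p) (ψ 1 q)
    (hψψ 0 0 m p) (hψψ 0 1 m q) (hm'' 0 1 p n) (hm'' 1 1 q n)
  have h3 := comm4 (ψ 1 m) (ψb 0 n) (ψ 1 p) (ψ 0 q)
    (hψψ 1 1 m p) (hψψ 1 0 m q) (hm'' 1 0 p n) (hm'' 0 0 q n)
  have h4 := comm4 (ψ 1 m) (ψb 0 n) (ψ 0 p) (ψ 1 q)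
    (hψψ 1 0 m p) (hψψ 1 1 m q) (hm'' 0 0 p n) (hm'' 1 0 q n)
  have expand : Smode ψ ψb m n * Tmode ψ p q - Tmode ψ p q * Smode ψ ψb m n
      = (ψ 0 m*ψb 1 n*(ψ 1 p*ψ 0 q) - ψ 1 p*ψ 0 q*(ψ 0 m*ψb 1 n))
      - (ψ 0 m*ψb 1 n*(ψ 0 p*ψ 1 q) - ψ 0 p*ψ 1 q*(ψ 0 m*ψb 1 n))
      + (ψ 1 m*ψb 0 n*(ψ 1 p*ψ 0 q) - ψ 1 p*ψ 0 q*(ψ 1 m*ψb 0 n))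
      - (ψ 1 m*ψb 0 n*(ψ 0 p*ψ 1 q) - ψ 0 p*ψ 1 q*(ψ 1 m*ψb 0 n)) := by
    simp only [Smode, Tmode]; noncomm_ring
  rw [expand, h1, h2, h3, h4]
  simp only [Smode, hJ11, hJ12, hJ21, hJ22, hfl]
  module

include hJ11 hJ12 hJ21 hJ22 hψbψb hmix in
lemma commSTb (m n p q : ℤ) :
    Smode ψ ψb m n * Tmode ψb p q - Tmode ψb p q * Smode ψ ψb m n
      = ((n:ℂ) * (if n + p = 0 then 1 else 0)) • Smode ψ ψb m q
      + ((n:ℂ) * (if n + q = 0 then 1 else 0)) • Smode ψ ψb m p := by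
  have hm' := hmix' ψ ψb hmix
  have hfl := hflip ψ ψb hmix
  have h1 := comm4 (ψ 0 m) (ψb 1 n) (ψb 1 p) (ψb 0 q)
    (hm' 0 1 m p) (hm' 0 0 m q) (hψbψb 1 1 n p) (hψbψb 1 0 n q)
  have h2 := comm4 (ψ 0 m) (ψb 1 n) (ψb 0 p) (ψb 1 q)
    (hm' 0 0 m p) (hm' 0 1 m q) (hψbψb 1 0 n p) (hψbψb 1 1 n q)
  have h3 := comm4 (ψ 1 m) (ψb 0 n) (ψb 1 p) (ψb 0 q)
    (hm' 1 1 m p) (hm' 1 0 m q) (hψbψb 0 1 n p) (hψbψb 0 0 n q)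
  have h4 := comm4 (ψ 1 m) (ψb 0 n) (ψb 0 p) (ψb 1 q)
    (hm' 1 0 m p) (hm' 1 1 m q) (hψbψb 0 0 n p) (hψbψb 0 1 n q)
  have expand : Smode ψ ψb m n * Tmode ψb p q - Tmode ψb p q * Smode ψ ψb m n
      = (ψ 0 m*ψb 1 n*(ψb 1 p*ψb 0 q) - ψb 1 p*ψb 0 q*(ψ 0 m*ψb 1 n))
      - (ψ 0 m*ψb 1 n*(ψb 0 p*ψb 1 q) - ψb 0 p*ψb 1 q*(ψ 0 m*ψb 1 n))
      + (ψ 1 m*ψb 0 n*(ψb 1 p*ψb 0 q) - ψb 1 p*ψb 0 q*(ψ 1 m*ψb 0 n))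
      - (ψ 1 m*ψb 0 n*(ψb 0 p*ψb 1 q) - ψb 0 p*ψb 1 q*(ψ 1 m*ψb 0 n)) := by
    simp only [Smode, Tmode]; noncomm_ring
  rw [expand, h1, h2, h3, h4]
  simp only [Smode, hJ11, hJ12, hJ21, hJ22, hfl]
  module

set_option linter.unusedSectionVars false in
include hmix in
lemma commTTb (m n p q : ℤ) :
    Tmode ψ m n * Tmode ψb p q - Tmode ψb p q * Tmode ψ m n = 0 := by
  have hm' := hmix' ψ ψb hmix
  have h1 := comm4 (ψ 1 m) (ψ 0 n) (ψb 1 p) (ψb 0 q)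
    (hm' 1 1 m p) (hm' 1 0 m q) (hm' 0 1 n p) (hm' 0 0 n q)
  have h2 := comm4 (ψ 1 m) (ψ 0 n) (ψb 0 p) (ψb 1 q)
    (hm' 1 0 m p) (hm' 1 1 m q) (hm' 0 0 n p) (hm' 0 1 n q)
  have h3 := comm4 (ψ 0 m) (ψ 1 n) (ψb 1 p) (ψb 0 q)
    (hm' 0 1 m p) (hm' 0 0 m q) (hm' 1 1 n p) (hm' 1 0 n q)
  have h4 := comm4 (ψ 0 m) (ψ 1 n) (ψb 0 p) (ψb 1 q)
    (hm' 0 0 m p) (hm' 0 1 m q) (hm' 1 0 n p) (hm' 1 1 n q)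
  have expand : Tmode ψ m n * Tmode ψb p q - Tmode ψb p q * Tmode ψ m n
      = (ψ 1 m*ψ 0 n*(ψb 1 p*ψb 0 q) - ψb 1 p*ψb 0 q*(ψ 1 m*ψ 0 n))
      - (ψ 1 m*ψ 0 n*(ψb 0 p*ψb 1 q) - ψb 0 p*ψb 1 q*(ψ 1 m*ψ 0 n))
      - (ψ 0 m*ψ 1 n*(ψb 1 p*ψb 0 q) - ψb 1 p*ψb 0 q*(ψ 0 m*ψ 1 n))
      + (ψ 0 m*ψ 1 n*(ψb 0 p*ψb 1 q) - ψb 0 p*ψb 1 q*(ψ 0 m*ψ 1 n)) := by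
    simp only [Tmode]; noncomm_ring
  rw [expand, h1, h2, h3, h4]
  module

end Aux

theorem interchiral_span_is_lie_subalgebra
    {A : Type*} [Ring A] [Algebra ℂ A]
    (ψ ψb : Fin 2 → ℤ → A) (J : Fin 2 → Fin 2 → ℂ)
    (hJ11 : J 0 0 = 0) (hJ12 : J 0 1 = 1) (hJ21 : J 1 0 = -1) (hJ22 : J 1 1 = 0)
    (hψψ : ∀ (α β : Fin 2) (m n : ℤ),
      ψ α m * ψ β n + ψ β n * ψ α m =
        ((m : ℂ) * J α β * (if m + n = 0 then 1 else 0)) • (1 : A))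
    (hψbψb : ∀ (α β : Fin 2) (m n : ℤ),
      ψb α m * ψb β n + ψb β n * ψb α m =
        ((m : ℂ) * J α β * (if m + n = 0 then 1 else 0)) • (1 : A))
    (hmix : ∀ (α β : Fin 2) (m n : ℤ), ψ α m * ψb β n + ψb β n * ψ α m = 0) :
    ∀ x ∈ Submodule.span ℂ
        ({(1 : A)} ∪ {x | ∃ m n : ℤ, x = Smode ψ ψb m n} ∪
          {x | ∃ m n : ℤ, x = Tmode ψ m n} ∪ {x | ∃ m n : ℤ, x = Tmode ψb m n}),
      ∀ y ∈ Submodule.span ℂ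
        ({(1 : A)} ∪ {x | ∃ m n : ℤ, x = Smode ψ ψb m n} ∪
          {x | ∃ m n : ℤ, x = Tmode ψ m n} ∪ {x | ∃ m n : ℤ, x = Tmode ψb m n}),
      x * y - y * x ∈ Submodule.span ℂ
        ({(1 : A)} ∪ {x | ∃ m n : ℤ, x = Smode ψ ψb m n} ∪
          {x | ∃ m n : ℤ, x = Tmode ψ m n} ∪ {x | ∃ m n : ℤ, x = Tmode ψb m n}) := by
  set G : Set A := ({(1 : A)} ∪ {x | ∃ m n : ℤ, x = Smode ψ ψb m n} ∪
      {x | ∃ m n : ℤ, x = Tmode ψ m n} ∪ {x | ∃ m n : ℤ, x = Tmode ψb m n}) with hG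
  set K : Submodule ℂ A := Submodule.span ℂ G with hK
  have h1K : (1 : A) ∈ K := Submodule.subset_span
    (Set.mem_union_left _ (Set.mem_union_left _ (Set.mem_union_left _ rfl)))
  have hSK : ∀ m n : ℤ, Smode ψ ψb m n ∈ K := fun m n => Submodule.subset_span
    (Set.mem_union_left _ (Set.mem_union_left _ (Set.mem_union_right _ ⟨m, n, rfl⟩)))
  have hTK : ∀ m n : ℤ, Tmode ψ m n ∈ K := fun m n => Submodule.subset_span
    (Set.mem_union_left _ (Set.mem_union_right _ ⟨m, n, rfl⟩))
  have hTbK : ∀ m n : ℤ, Tmode ψb m n ∈ K := fun m n => Submodule.subset_span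
    (Set.mem_union_right _ ⟨m, n, rfl⟩)
  intro x hx y hy
  refine Submodule.span_induction₂
    (p := fun x y _ _ => x * y - y * x ∈ K) ?_ ?_ ?_ ?_ ?_ ?_ ?_ hx hy
  · rintro x y (((rfl | ⟨m, n, rfl⟩) | ⟨m, n, rfl⟩) | ⟨m, n, rfl⟩)
      (((rfl | ⟨p, q, rfl⟩) | ⟨p, q, rfl⟩) | ⟨p, q, rfl⟩)
    -- x = 1 cases
    · simpa using K.zero_mem
    · simpa using K.zero_mem
    · simpa using K.zero_mem
    · simpa using K.zero_mem
    -- x = S cases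
    · simpa using K.zero_mem
    · rw [commSS ψ ψb J hJ11 hJ12 hJ21 hJ22 hψψ hψbψb hmix m n p q]
      exact add_mem (K.smul_mem _ (hTbK _ _)) (K.smul_mem _ (hTK _ _))
    · rw [commST ψ ψb J hJ11 hJ12 hJ21 hJ22 hψψ hmix m n p q]
      exact add_mem (K.smul_mem _ (hSK _ _)) (K.smul_mem _ (hSK _ _))
    · rw [commSTb ψ ψb J hJ11 hJ12 hJ21 hJ22 hψbψb hmix m n p q]
      exact add_mem (K.smul_mem _ (hSK _ _)) (K.smul_mem _ (hSK _ _))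
    -- x = T cases
    · simpa using K.zero_mem
    · rw [← neg_sub, commST ψ ψb J hJ11 hJ12 hJ21 hJ22 hψψ hmix p q m n]
      exact neg_mem (add_mem (K.smul_mem _ (hSK _ _)) (K.smul_mem _ (hSK _ _)))
    · rw [commTT J hJ11 hJ12 hJ21 hJ22 ψ hψψ m n p q]
      exact add_mem (add_mem (add_mem (K.smul_mem _ (hTK _ _)) (K.smul_mem _ (hTK _ _)))
        (K.smul_mem _ (hTK _ _))) (K.smul_mem _ (hTK _ _))
    · rw [commTTb ψ ψb hmix m n p q]
      exact K.zero_mem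
    -- x = T̄ cases
    · simpa using K.zero_mem
    · rw [← neg_sub, commSTb ψ ψb J hJ11 hJ12 hJ21 hJ22 hψbψb hmix p q m n]
      exact neg_mem (add_mem (K.smul_mem _ (hSK _ _)) (K.smul_mem _ (hSK _ _)))
    · rw [← neg_sub, commTTb ψ ψb hmix p q m n]
      simpa using K.zero_mem
    · rw [commTT J hJ11 hJ12 hJ21 hJ22 ψb hψbψb m n p q]
      exact add_mem (add_mem (add_mem (K.smul_mem _ (hTbK _ _)) (K.smul_mem _ (hTbK _ _)))
        (K.smul_mem _ (hTbK _ _))) (K.smul_mem _ (hTbK _ _))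
  · intro y _; simpa using K.zero_mem
  · intro x _; simpa using K.zero_mem
  · intro x y z _ _ _ h1 h2
    have : (x + y) * z - z * (x + y) = (x * z - z * x) + (y * z - z * y) := by noncomm_ring
    rw [this]; exact add_mem h1 h2
  · intro x y z _ _ _ h1 h2
    have : x * (y + z) - (y + z) * x = (x * y - y * x) + (x * z - z * x) := by noncomm_ring
    rw [this]; exact add_mem h1 h2
  · intro r x y _ _ h
    have : (r • x) * y - y * (r • x) = r • (x * y - y * x) := by
      rw [smul_mul_assoc, mul_smul_comm, smul_sub]
    rw [this]; exact K.smul_mem r h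
  · intro r x y _ _ h
    have : x * (r • y) - (r • y) * x = r • (x * y - y * x) := by
      rw [smul_mul_assoc, mul_smul_comm, smul_sub]
    rw [this]; exact K.smul_mem r h
end

section
/- Let j ≥ 0 and k ≥ 1 be integers, set ε₁ := (j+k) mod 2 and ε₂ := j mod 2, and let t, u be complex numbers with |t| < 1 and |u| < 1. Then all the series below converge absolutely and ( ∑_{n ∈ ℤ} t^{(j+2n+ε₁)²} · u^{(j-2n-ε₁)²} ) - ( ∑_{n ∈ ℤ} t^{(j+k+2n+ε₂)²} · u^{(j+k-2n-ε₂)²} ) = ∑_{r=1}^{∞} ( t^{(2r-k)²} - t^{(2r+k)²} ) · ( u^{(2r-k-2j)²} - u^{(2r+k+2j)²} ), where every exponent is the square of an integer (hence a natural number). -/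
private lemma natAbs_le_sq_toNat (m ρ : ℤ) (h0 : 0 ≤ ρ) (h1 : ρ ≤ 1) :
    m.natAbs ≤ ((2 * m + ρ) ^ 2).toNat := by
  have h2 : (m.natAbs : ℤ) ≤ (2 * m + ρ) ^ 2 := by
    have habs : (m.natAbs : ℤ) = |m| := Int.abs_eq_natAbs m ▸ rfl
    rw [habs]
    rcases abs_cases m with ⟨h, _⟩ | ⟨h, _⟩ <;> rw [h] <;> nlinarith
  omega

private lemma summable_norm_aux (t u : ℂ) (ht : ‖t‖ < 1) (hu : ‖u‖ < 1)
    (ρ c : ℤ) (h0 : 0 ≤ ρ) (h1 : ρ ≤ 1) :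
    Summable fun m : ℤ =>
      ‖t ^ ((2 * m + ρ) ^ 2).toNat * u ^ ((c - (2 * m + ρ)) ^ 2).toNat‖ := by
  have hbase : Summable fun m : ℤ => ‖t‖ ^ m.natAbs := by
    apply Summable.of_nat_of_neg <;>
      simpa using summable_geometric_of_lt_one (norm_nonneg t) ht
  apply Summable.of_nonneg_of_le (fun m => norm_nonneg _) _ hbase
  intro m
  rw [norm_mul, norm_pow, norm_pow]
  calc ‖t‖ ^ ((2 * m + ρ) ^ 2).toNat * ‖u‖ ^ ((c - (2 * m + ρ)) ^ 2).toNat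
      ≤ ‖t‖ ^ ((2 * m + ρ) ^ 2).toNat * 1 := by
        gcongr
        exact pow_le_one₀ (norm_nonneg u) hu.le
    _ = ‖t‖ ^ ((2 * m + ρ) ^ 2).toNat := mul_one _
    _ ≤ ‖t‖ ^ m.natAbs :=
        pow_le_pow_of_le_one (norm_nonneg t) ht.le (natAbs_le_sq_toNat m ρ h0 h1)

set_option maxHeartbeats 1000000 in
/-- The character identity (Appendix E, eq. "useful") at 𝔮 = i, after multiplying by eta
factors and substituting `q = t⁸`, `q̄ = u⁸`:
`F_{j,𝔮^{2j+2k}} - F_{j+k,𝔮^{2j}} = ∑_{r≥1} K_{r,k} K̄_{r,k+2j}`. -/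
theorem character_identity_useful (j k : ℤ) (hj : 0 ≤ j) (hk : 1 ≤ k)
    (t u : ℂ) (ht : ‖t‖ < 1) (hu : ‖u‖ < 1) :
    (Summable fun n : ℤ =>
      ‖t ^ ((j + 2 * n + (j + k) % 2) ^ 2).toNat *
        u ^ ((j - 2 * n - (j + k) % 2) ^ 2).toNat‖) ∧
    (Summable fun n : ℤ =>
      ‖t ^ ((j + k + 2 * n + j % 2) ^ 2).toNat *
        u ^ ((j + k - 2 * n - j % 2) ^ 2).toNat‖) ∧
    (Summable fun r : ℕ =>
      ‖(t ^ ((2 * ((r : ℤ) + 1) - k) ^ 2).toNat -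
          t ^ ((2 * ((r : ℤ) + 1) + k) ^ 2).toNat) *
        (u ^ ((2 * ((r : ℤ) + 1) - k - 2 * j) ^ 2).toNat -
          u ^ ((2 * ((r : ℤ) + 1) + k + 2 * j) ^ 2).toNat)‖) ∧
    (∑' n : ℤ,
        t ^ ((j + 2 * n + (j + k) % 2) ^ 2).toNat *
          u ^ ((j - 2 * n - (j + k) % 2) ^ 2).toNat) -
      (∑' n : ℤ,
        t ^ ((j + k + 2 * n + j % 2) ^ 2).toNat *
          u ^ ((j + k - 2 * n - j % 2) ^ 2).toNat) =
      ∑' r : ℕ,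
        (t ^ ((2 * ((r : ℤ) + 1) - k) ^ 2).toNat -
            t ^ ((2 * ((r : ℤ) + 1) + k) ^ 2).toNat) *
          (u ^ ((2 * ((r : ℤ) + 1) - k - 2 * j) ^ 2).toNat -
            u ^ ((2 * ((r : ℤ) + 1) + k + 2 * j) ^ 2).toNat) := by
  obtain ⟨d, hd⟩ : ∃ d : ℤ, 2 * d + k % 2 = k := ⟨k / 2, by omega⟩
  obtain ⟨s₁, hs₁⟩ : ∃ s : ℤ, 2 * s + k % 2 = j + (j + k) % 2 :=
    ⟨(j + (j + k) % 2 - k % 2) / 2, by omega⟩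
  obtain ⟨s₂, hs₂⟩ : ∃ s : ℤ, 2 * s + k % 2 = j + k + j % 2 :=
    ⟨(j + k + j % 2 - k % 2) / 2, by omega⟩
  set e : ℤ := d + k % 2 with hedef
  set F : ℤ → ℂ := fun m =>
    t ^ ((2 * m + k % 2) ^ 2).toNat * u ^ ((2 * j - (2 * m + k % 2)) ^ 2).toNat with hFdef
  set G : ℤ → ℂ := fun m =>
    t ^ ((2 * m + k % 2) ^ 2).toNat *
      u ^ ((2 * j + 2 * k - (2 * m + k % 2)) ^ 2).toNat with hGdef
  have hρ0 : (0 : ℤ) ≤ k % 2 := Int.emod_nonneg k (by norm_num)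
  have hρ1 : k % 2 ≤ 1 := by omega
  have hFn : Summable fun m : ℤ => ‖F m‖ :=
    summable_norm_aux t u ht hu (k % 2) (2 * j) hρ0 hρ1
  have hGn : Summable fun m : ℤ => ‖G m‖ :=
    summable_norm_aux t u ht hu (k % 2) (2 * j + 2 * k) hρ0 hρ1
  have hFs : Summable F := hFn.of_norm
  have hGs : Summable G := hGn.of_norm
  -- pointwise identification of the two lattice sums
  have h1 : ∀ n : ℤ,
      t ^ ((j + 2 * n + (j + k) % 2) ^ 2).toNat *
        u ^ ((j - 2 * n - (j + k) % 2) ^ 2).toNat = F (n + s₁) := by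
    intro n
    have e1 : 2 * (n + s₁) + k % 2 = j + 2 * n + (j + k) % 2 := by omega
    have e2 : 2 * j - (2 * (n + s₁) + k % 2) = j - 2 * n - (j + k) % 2 := by omega
    simp only [hFdef]
    rw [e2, e1]
  have h2 : ∀ n : ℤ,
      t ^ ((j + k + 2 * n + j % 2) ^ 2).toNat *
        u ^ ((j + k - 2 * n - j % 2) ^ 2).toNat = G (n + s₂) := by
    intro n
    have e1 : 2 * (n + s₂) + k % 2 = j + k + 2 * n + j % 2 := by omega
    have e2 : 2 * j + 2 * k - (2 * (n + s₂) + k % 2) = j + k - 2 * n - j % 2 := by omega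
    simp only [hGdef]
    rw [e2, e1]
  -- shifted versions
  set F' : ℤ → ℂ := fun m => F (m - e) with hF'def
  set G' : ℤ → ℂ := fun m => G (m + d) with hG'def
  have hF's : Summable F' := (Equiv.subRight e).summable_iff (f := F) |>.mpr hFs
  have hG's : Summable G' := (Equiv.addRight d).summable_iff (f := G) |>.mpr hGs
  have hFn' : Summable fun m : ℤ => ‖F' m‖ := (Equiv.subRight e).summable_iff (f := fun m : ℤ => ‖F m‖) |>.mpr hFn
  have hGn' : Summable fun m : ℤ => ‖G' m‖ := (Equiv.addRight d).summable_iff (f := fun m : ℤ => ‖G m‖) |>.mpr hGn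
  have injp : Function.Injective fun n : ℕ => (n : ℤ) + 1 := fun a b h => by
    simpa using h
  have injn : Function.Injective fun n : ℕ => -((n : ℤ) + 1) := fun a b h => by
    simp only at h; omega
  have sAp : Summable fun n : ℕ => F' ((n : ℤ) + 1) := hF's.comp_injective injp
  have sAn : Summable fun n : ℕ => F' (-((n : ℤ) + 1)) := hF's.comp_injective injn
  have sCp : Summable fun n : ℕ => G' ((n : ℤ) + 1) := hG's.comp_injective injp
  have sCn : Summable fun n : ℕ => G' (-((n : ℤ) + 1)) := hG's.comp_injective injn
  -- decompositions of the full lattice sums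
  have hFdec : (∑' m : ℤ, F m) =
      (∑' n : ℕ, F' ((n : ℤ) + 1)) + F' 0 + ∑' n : ℕ, F' (-((n : ℤ) + 1)) := by
    have hsum : HasSum F' ((∑' n : ℕ, F' ((n : ℤ) + 1)) + F' 0 +
        ∑' n : ℕ, F' (-((n : ℤ) + 1))) :=
      sAp.hasSum.of_add_one_of_neg_add_one sAn.hasSum
    have hF'eq : HasSum F' (∑' m : ℤ, F m) :=
      (Equiv.subRight e).hasSum_iff (f := F) |>.mpr hFs.hasSum
    exact hF'eq.unique hsum
  have hGdec : (∑' m : ℤ, G m) =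
      (∑' n : ℕ, G' ((n : ℤ) + 1)) + G' 0 + ∑' n : ℕ, G' (-((n : ℤ) + 1)) := by
    have hsum : HasSum G' ((∑' n : ℕ, G' ((n : ℤ) + 1)) + G' 0 +
        ∑' n : ℕ, G' (-((n : ℤ) + 1))) :=
      sCp.hasSum.of_add_one_of_neg_add_one sCn.hasSum
    have hG'eq : HasSum G' (∑' m : ℤ, G m) :=
      (Equiv.addRight d).hasSum_iff (f := G) |>.mpr hGs.hasSum
    exact hG'eq.unique hsum
  have h00 : F' 0 = G' 0 := by
    simp only [hF'def, hG'def, hFdef, hGdef]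
    have c1 : 2 * ((0 : ℤ) - e) + k % 2 = -k := by omega
    have c2 : 2 * ((0 : ℤ) + d) + k % 2 = k := by omega
    rw [c1, c2, show ((-k : ℤ)) ^ 2 = k ^ 2 from by ring,
      show (2 * j - -k : ℤ) = 2 * j + 2 * k - k from by ring]
  -- identification of the right-hand summand
  have hH : ∀ r : ℕ,
      (t ^ ((2 * ((r : ℤ) + 1) - k) ^ 2).toNat -
          t ^ ((2 * ((r : ℤ) + 1) + k) ^ 2).toNat) *
        (u ^ ((2 * ((r : ℤ) + 1) - k - 2 * j) ^ 2).toNat -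
          u ^ ((2 * ((r : ℤ) + 1) + k + 2 * j) ^ 2).toNat) =
      F' ((r : ℤ) + 1) + F' (-((r : ℤ) + 1)) - G' ((r : ℤ) + 1) - G' (-((r : ℤ) + 1)) := by
    intro r
    set R : ℤ := (r : ℤ) + 1 with hR
    simp only [hF'def, hG'def, hFdef, hGdef]
    have a1 : 2 * (R - e) + k % 2 = 2 * R - k := by omega
    have a2 : 2 * (-R - e) + k % 2 = -(2 * R + k) := by omega
    have a3 : 2 * (R + d) + k % 2 = 2 * R + k := by omega
    have a4 : 2 * (-R + d) + k % 2 = -(2 * R - k) := by omega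
    rw [a1, a2, a3, a4,
      show (2 * j - (2 * R - k)) ^ 2 = (2 * R - k - 2 * j) ^ 2 from by ring,
      show ((-(2 * R + k)) ^ 2 : ℤ) = (2 * R + k) ^ 2 from by ring,
      show (2 * j - -(2 * R + k)) ^ 2 = (2 * R + k + 2 * j) ^ 2 from by ring,
      show (2 * j + 2 * k - (2 * R + k)) ^ 2 = (2 * R - k - 2 * j) ^ 2 from by ring,
      show ((-(2 * R - k)) ^ 2 : ℤ) = (2 * R - k) ^ 2 from by ring,
      show (2 * j + 2 * k - -(2 * R - k)) ^ 2 = (2 * R + k + 2 * j) ^ 2 from by ring]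
    ring
  -- the three summability claims
  have sum1 : Summable fun n : ℤ =>
      ‖t ^ ((j + 2 * n + (j + k) % 2) ^ 2).toNat *
        u ^ ((j - 2 * n - (j + k) % 2) ^ 2).toNat‖ := by
    have heq : (fun n : ℤ =>
        ‖t ^ ((j + 2 * n + (j + k) % 2) ^ 2).toNat *
          u ^ ((j - 2 * n - (j + k) % 2) ^ 2).toNat‖) =
        fun n : ℤ => ‖F (n + s₁)‖ := funext fun n => by rw [h1 n]
    rw [heq]
    exact hFn.comp_injective (add_left_injective s₁)
  have sum2 : Summable fun n : ℤ =>
      ‖t ^ ((j + k + 2 * n + j % 2) ^ 2).toNat *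
        u ^ ((j + k - 2 * n - j % 2) ^ 2).toNat‖ := by
    have heq : (fun n : ℤ =>
        ‖t ^ ((j + k + 2 * n + j % 2) ^ 2).toNat *
          u ^ ((j + k - 2 * n - j % 2) ^ 2).toNat‖) =
        fun n : ℤ => ‖G (n + s₂)‖ := funext fun n => by rw [h2 n]
    rw [heq]
    exact hGn.comp_injective (add_left_injective s₂)
  have sum3 : Summable fun r : ℕ =>
      ‖(t ^ ((2 * ((r : ℤ) + 1) - k) ^ 2).toNat -
          t ^ ((2 * ((r : ℤ) + 1) + k) ^ 2).toNat) *
        (u ^ ((2 * ((r : ℤ) + 1) - k - 2 * j) ^ 2).toNat -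
          u ^ ((2 * ((r : ℤ) + 1) + k + 2 * j) ^ 2).toNat)‖ := by
    apply Summable.of_nonneg_of_le
      (f := fun r : ℕ => ‖F' ((r : ℤ) + 1)‖ + ‖F' (-((r : ℤ) + 1))‖ +
        ‖G' ((r : ℤ) + 1)‖ + ‖G' (-((r : ℤ) + 1))‖) (fun r => norm_nonneg _)
    · intro r
      rw [hH r]
      have n1 := norm_sub_le (F' ((r : ℤ) + 1) + F' (-((r : ℤ) + 1)) - G' ((r : ℤ) + 1))
        (G' (-((r : ℤ) + 1)))
      have n2 := norm_sub_le (F' ((r : ℤ) + 1) + F' (-((r : ℤ) + 1))) (G' ((r : ℤ) + 1))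
      have n3 := norm_add_le (F' ((r : ℤ) + 1)) (F' (-((r : ℤ) + 1)))
      linarith
    · exact ((hFn'.comp_injective injp).add (hFn'.comp_injective injn)).add
        ((hGn'.comp_injective injp).add (hGn'.comp_injective injn)) |>.congr
        (fun r => by simp only [Function.comp_apply]; ring)
  refine ⟨sum1, sum2, sum3, ?_⟩
  -- reindex the two lattice sums
  have t1 : (∑' n : ℤ,
      t ^ ((j + 2 * n + (j + k) % 2) ^ 2).toNat *
        u ^ ((j - 2 * n - (j + k) % 2) ^ 2).toNat) = ∑' m : ℤ, F m := by
    rw [tsum_congr h1]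
    exact (Equiv.addRight s₁).tsum_eq F
  have t2 : (∑' n : ℤ,
      t ^ ((j + k + 2 * n + j % 2) ^ 2).toNat *
        u ^ ((j + k - 2 * n - j % 2) ^ 2).toNat) = ∑' m : ℤ, G m := by
    rw [tsum_congr h2]
    exact (Equiv.addRight s₂).tsum_eq G
  have t3 : (∑' r : ℕ,
      (t ^ ((2 * ((r : ℤ) + 1) - k) ^ 2).toNat -
          t ^ ((2 * ((r : ℤ) + 1) + k) ^ 2).toNat) *
        (u ^ ((2 * ((r : ℤ) + 1) - k - 2 * j) ^ 2).toNat -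
          u ^ ((2 * ((r : ℤ) + 1) + k + 2 * j) ^ 2).toNat)) =
      (∑' n : ℕ, F' ((n : ℤ) + 1)) + (∑' n : ℕ, F' (-((n : ℤ) + 1))) -
        (∑' n : ℕ, G' ((n : ℤ) + 1)) - ∑' n : ℕ, G' (-((n : ℤ) + 1)) := by
    rw [tsum_congr hH, Summable.tsum_sub ((sAp.add sAn).sub sCp) sCn,
      Summable.tsum_sub (sAp.add sAn) sCp, Summable.tsum_add sAp sAn]
  rw [t1, t2, t3, hFdec, hGdec, h00]
  ring
end

section
/- Let j ≥ 1 be an integer and let t, u be complex numbers with |t| < 1 and |u| < 1. Then the double series below converges absolutely and ∑_{j'=j}^{∞} (-1)^{j'-j} ∑_{r=1}^{∞} ( t^{(2r-1)²} - t^{(2r+1)²} ) · ( u^{(2r-2j'-1)²} - u^{(2r+2j'+1)²} ) = ∑_{(j₁,j₂)} ( t^{(2j₁-1)²} - t^{(2j₁+1)²} ) · ( u^{(2j₂-1)²} - u^{(2j₂+1)²} ), where the right-hand sum runs over all pairs of integers j₁, j₂ ≥ 1 satisfying |j₁-j₂| + 1 ≤ j, j₁ + j₂ - 1 ≥ j,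 and j₁ + j₂ - j odd; every exponent is the square of an integer. -/
/-!
Write `χ(r) = t ^ (2r-1)² - t ^ (2r+1)²`, so that `chiChiTerm t u x y = χ_t(x) χ_u(y)` and
`χ(-r) = -χ(r)`. The `u`-factor of `KKterm` telescopes in the spin:
`K_{j'} - K_{j'+1} = χ_t(r) (χ_u(j'+1-r) - χ_u(j'+1+r))`. Grouping the alternating series in pairs
`j' = j + 2m, j + 2m + 1` therefore turns it into the sum of `χ_t(x) χ_u(y)` over the lattice
points `x ≥ 1` on the antidiagonals `x + y = j + 1 + 2m`, minus the sum over the points of the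
same parity with `y - x > j`. What is left is the fusion band `|x - y| < j` together with the
wedge `x - y > j`, and the latter sums to zero because it is symmetric under `y ↦ -y`, which
flips the sign of `χ_u(y)`. Absolute convergence, which justifies every rearrangement, comes
from the exponents growing at least linearly in `|x| + |y|`.
-/

/-- `K_{r,1}(t) · K̄_{r,2j'+1}(u)` after multiplying by eta factors and substituting
`q = t⁸`, `q̄ = u⁸`. -/
def KKterm (t u : ℂ) (j' r : ℤ) : ℂ :=
  (t ^ ((2 * r - 1) ^ 2).toNat - t ^ ((2 * r + 1) ^ 2).toNat) *
    (u ^ ((2 * r - 2 * j' - 1) ^ 2).toNat - u ^ ((2 * r + 2 * j' + 1) ^ 2).toNat)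

/-- `χ_{j₁,1}(t) · χ̄_{j₂,1}(u)` after the same substitution. -/
def chiChiTerm (t u : ℂ) (j₁ j₂ : ℤ) : ℂ :=
  (t ^ ((2 * j₁ - 1) ^ 2).toNat - t ^ ((2 * j₁ + 1) ^ 2).toNat) *
    (u ^ ((2 * j₂ - 1) ^ 2).toNat - u ^ ((2 * j₂ + 1) ^ 2).toNat)

theorem Int.toNat_sq (x : ℤ) : (x ^ 2).toNat = x.natAbs ^ 2 := by
  rw [← Int.natAbs_sq, ← Int.natCast_pow, Int.toNat_natCast]

theorem min_natAbs_le_min_toNat_sq (x y : ℤ) :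
    min x.natAbs y.natAbs ≤ min (x ^ 2).toNat (y ^ 2).toNat := by
  rw [Int.toNat_sq, Int.toNat_sq]
  exact min_le_min (Nat.le_self_pow two_ne_zero _) (Nat.le_self_pow two_ne_zero _)

theorem tsum_neg_one_pow_mul_eq_tsum_sub {R : Type*} [NormedRing R] [CompleteSpace R]
    {f : ℕ → R} (hf : Summable f) :
    ∑' i, (-1) ^ i * f i = ∑' m, (f (2 * m) - f (2 * m + 1)) := by
  have hinj : Function.Injective fun m : ℕ => 2 * m := mul_right_injective₀ two_ne_zero
  have he : Summable fun m => f (2 * m) := hf.comp_injective hinj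
  have ho : Summable fun m => f (2 * m + 1) := hf.comp_injective ((add_left_injective 1).comp hinj)
  have heven (m : ℕ) : (-1 : R) ^ (2 * m) = 1 := (even_two_mul m).neg_one_pow
  have hodd (m : ℕ) : (-1 : R) ^ (2 * m + 1) = -1 := (odd_two_mul_add_one m).neg_one_pow
  have he' : Summable fun m => (-1 : R) ^ (2 * m) * f (2 * m) := by
    simpa only [heven, one_mul] using he
  have ho' : Summable fun m => (-1 : R) ^ (2 * m + 1) * f (2 * m + 1) := by
    simpa only [hodd, neg_one_mul] using ho.neg
  rw [← tsum_even_add_odd (f := fun i => (-1 : R) ^ i * f i) he' ho', he.tsum_sub ho,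
    sub_eq_add_neg, ← tsum_neg]
  simp only [heven, hodd, one_mul, neg_one_mul]

theorem tsum_eq_zero_of_comp_equiv_eq_neg {β G : Type*} [AddCommGroup G] [TopologicalSpace G]
    [IsTopologicalAddGroup G] [T2Space G] [IsAddTorsionFree G] (e : β ≃ β) {f : β → G}
    (hf : ∀ b, f (e b) = -f b) : ∑' b, f b = 0 := by
  rw [← self_eq_neg, ← tsum_neg]
  calc ∑' b, f b = ∑' b, f (e b) := (e.tsum_eq f).symm
    _ = ∑' b, -f b := tsum_congr hf

section Bounds

variable {R : Type*} [SeminormedRing R] [NormOneClass R] {t u : R} {v : ℝ}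

theorem norm_pow_sub_pow_le (hv : v ≤ 1) (ht : ‖t‖ ≤ v) (a b : ℕ) :
    ‖t ^ a - t ^ b‖ ≤ 2 * v ^ min a b := by
  have hv0 : 0 ≤ v := (norm_nonneg t).trans ht
  have hpow : ∀ n, min a b ≤ n → ‖t ^ n‖ ≤ v ^ min a b := fun n hn =>
    (norm_pow_le t n).trans <|
      (pow_le_pow_left₀ (norm_nonneg t) ht n).trans (pow_le_pow_of_le_one hv0 hv hn)
  calc ‖t ^ a - t ^ b‖ ≤ ‖t ^ a‖ + ‖t ^ b‖ := norm_sub_le _ _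
    _ ≤ v ^ min a b + v ^ min a b :=
      add_le_add (hpow a (min_le_left a b)) (hpow b (min_le_right a b))
    _ = 2 * v ^ min a b := (two_mul _).symm

theorem norm_sq_pow_sub_mul_sq_pow_sub_le (hv : v ≤ 1) (ht : ‖t‖ ≤ v) (hu : ‖u‖ ≤ v)
    {a b c d : ℤ} {n : ℕ} (hn : n ≤ min a.natAbs b.natAbs + min c.natAbs d.natAbs) :
    ‖(t ^ (a ^ 2).toNat - t ^ (b ^ 2).toNat) * (u ^ (c ^ 2).toNat - u ^ (d ^ 2).toNat)‖ ≤
      4 * v ^ n := by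
  have hv0 : 0 ≤ v := (norm_nonneg t).trans ht
  set k := min (a ^ 2).toNat (b ^ 2).toNat + min (c ^ 2).toNat (d ^ 2).toNat
  have hnk : n ≤ k :=
    hn.trans (add_le_add (min_natAbs_le_min_toNat_sq a b) (min_natAbs_le_min_toNat_sq c d))
  calc _ ≤ ‖t ^ (a ^ 2).toNat - t ^ (b ^ 2).toNat‖ * ‖u ^ (c ^ 2).toNat - u ^ (d ^ 2).toNat‖ :=
        norm_mul_le _ _
    _ ≤ (2 * v ^ min (a ^ 2).toNat (b ^ 2).toNat) * (2 * v ^ min (c ^ 2).toNat (d ^ 2).toNat) :=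
        mul_le_mul (norm_pow_sub_pow_le hv ht _ _) (norm_pow_sub_pow_le hv hu _ _)
          (norm_nonneg _) (mul_nonneg zero_le_two (pow_nonneg hv0 _))
    _ = 4 * v ^ k := by rw [pow_add]; ring
    _ ≤ 4 * v ^ n := mul_le_mul_of_nonneg_left (pow_le_pow_of_le_one hv0 hv hnk) zero_le_four

end Bounds

theorem summable_pow_natAbs {v : ℝ} (hv0 : 0 ≤ v) (hv1 : v < 1) :
    Summable fun n : ℤ => v ^ n.natAbs :=
  .of_nat_of_neg ((summable_geometric_of_lt_one hv0 hv1).congr (by simp))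
    ((summable_geometric_of_lt_one hv0 hv1).congr (by simp))

theorem summable_norm_chiChiTerm {t u : ℂ} (ht : ‖t‖ < 1) (hu : ‖u‖ < 1) :
    Summable fun p : ℤ × ℤ => ‖chiChiTerm t u p.1 p.2‖ := by
  set v := max ‖t‖ ‖u‖
  have hv0 : 0 ≤ v := (norm_nonneg t).trans (le_max_left _ _)
  have hgeom := (summable_pow_natAbs hv0 (max_lt ht hu)).mul_of_nonneg
    (summable_pow_natAbs hv0 (max_lt ht hu)) (fun _ => pow_nonneg hv0 _)
    (fun _ => pow_nonneg hv0 _)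
  refine .of_nonneg_of_le (fun _ => norm_nonneg _) (fun p => ?_) (hgeom.mul_left 4)
  rw [← pow_add]
  exact norm_sq_pow_sub_mul_sq_pow_sub_le (max_lt ht hu).le (le_max_left _ _) (le_max_right _ _)
    (by omega)

theorem summable_norm_KKterm {t u : ℂ} {j : ℤ} (hj : 1 ≤ j) (ht : ‖t‖ < 1) (hu : ‖u‖ < 1) :
    Summable fun p : ℕ × ℕ => ‖KKterm t u (j + p.1) ((p.2 : ℤ) + 1)‖ := by
  set v := max ‖t‖ ‖u‖
  have hv0 : 0 ≤ v := (norm_nonneg t).trans (le_max_left _ _)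
  have hgeom := (summable_geometric_of_lt_one hv0 (max_lt ht hu)).mul_of_nonneg
    (summable_geometric_of_lt_one hv0 (max_lt ht hu)) (fun _ => pow_nonneg hv0 _)
    (fun _ => pow_nonneg hv0 _)
  refine .of_nonneg_of_le (fun _ => norm_nonneg _) (fun p => ?_) (hgeom.mul_left 4)
  rw [← pow_add]
  exact norm_sq_pow_sub_mul_sq_pow_sub_le (max_lt ht hu).le (le_max_left _ _) (le_max_right _ _)
    (by omega)

theorem chiChiTerm_neg_right (t u : ℂ) (x y : ℤ) : chiChiTerm t u x (-y) = -chiChiTerm t u x y := by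
  have h₁ : (2 * -y - 1) ^ 2 = (2 * y + 1) ^ 2 := by ring
  have h₂ : (2 * -y + 1) ^ 2 = (2 * y - 1) ^ 2 := by ring
  simp only [chiChiTerm, h₁, h₂]
  ring

theorem KKterm_sub_KKterm_succ (t u : ℂ) (j' r : ℤ) :
    KKterm t u j' r - KKterm t u (j' + 1) r =
      chiChiTerm t u r (j' + 1 - r) - chiChiTerm t u r (j' + 1 + r) := by
  have h₁ : (2 * (j' + 1 - r) - 1) ^ 2 = (2 * r - 2 * j' - 1) ^ 2 := by ring
  have h₂ : (2 * (j' + 1 - r) + 1) ^ 2 = (2 * r - 2 * (j' + 1) - 1) ^ 2 := by ring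
  have h₃ : (2 * (j' + 1 + r) - 1) ^ 2 = (2 * r + 2 * j' + 1) ^ 2 := by ring
  have h₄ : (2 * (j' + 1 + r) + 1) ^ 2 = (2 * r + 2 * (j' + 1) + 1) ^ 2 := by ring
  simp only [KKterm, chiChiTerm, h₁, h₂, h₃, h₄]
  ring

section Regions

variable (j : ℤ)

def fusionPairs : Set (ℤ × ℤ) :=
  {p | 1 ≤ p.1 ∧ 1 ≤ p.2 ∧ |p.1 - p.2| + 1 ≤ j ∧ j ≤ p.1 + p.2 - 1 ∧ Odd (p.1 + p.2 - j)}

def oddAntidiagonals : Set (ℤ × ℤ) := {p | 1 ≤ p.1 ∧ j < p.1 + p.2 ∧ Odd (p.1 + p.2 - j)}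

def lowerWedge : Set (ℤ × ℤ) := {p | j < p.1 - p.2 ∧ j < p.1 + p.2 ∧ Odd (p.1 + p.2 - j)}

def upperWedge : Set (ℤ × ℤ) := {p | 1 ≤ p.1 ∧ j < p.2 - p.1 ∧ Odd (p.1 + p.2 - j)}

/- The points `(r, j' + 1 ∓ r)` of `KKterm_sub_KKterm_succ` for `j' = j + 2m`, `r = s + 1`. -/
def minusIndex (p : ℕ × ℕ) : ℤ × ℤ := ((p.2 : ℤ) + 1, j + 2 * p.1 + 1 - ((p.2 : ℤ) + 1))

def plusIndex (p : ℕ × ℕ) : ℤ × ℤ := ((p.2 : ℤ) + 1, j + 2 * p.1 + 1 + ((p.2 : ℤ) + 1))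

variable {j}

theorem minusIndex_injective : Function.Injective (minusIndex j) := by
  rintro ⟨m, s⟩ ⟨m', s'⟩ h
  simp only [minusIndex, Prod.mk.injEq] at h
  ext <;> omega

theorem plusIndex_injective : Function.Injective (plusIndex j) := by
  rintro ⟨m, s⟩ ⟨m', s'⟩ h
  simp only [plusIndex, Prod.mk.injEq] at h
  ext <;> omega

theorem range_minusIndex : Set.range (minusIndex j) = oddAntidiagonals j := by
  ext ⟨x, y⟩
  simp only [Set.mem_range, minusIndex, oddAntidiagonals, Set.mem_ofPred_eq, Prod.mk.injEq,
    Prod.exists, Int.odd_iff]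
  constructor
  · rintro ⟨m, s, rfl, rfl⟩
    omega
  · rintro ⟨hx, hxy, hodd⟩
    exact ⟨((x + y - j) / 2).toNat, (x - 1).toNat, by omega, by omega⟩

theorem range_plusIndex : Set.range (plusIndex j) = upperWedge j := by
  ext ⟨x, y⟩
  simp only [Set.mem_range, plusIndex, upperWedge, Set.mem_ofPred_eq, Prod.mk.injEq,
    Prod.exists, Int.odd_iff]
  constructor
  · rintro ⟨m, s, rfl, rfl⟩
    omega
  · rintro ⟨hx, hxy, hodd⟩
    exact ⟨((y - x - j) / 2).toNat, (x - 1).toNat, by omega, by omega⟩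

theorem oddAntidiagonals_eq_union (hj : 0 ≤ j) :
    oddAntidiagonals j = fusionPairs j ∪ lowerWedge j ∪ upperWedge j := by
  ext ⟨x, y⟩
  simp only [oddAntidiagonals, fusionPairs, lowerWedge, upperWedge, Set.mem_ofPred_eq,
    Set.mem_union, Int.odd_iff]
  rcases abs_cases (x - y) with ⟨h, _⟩ | ⟨h, _⟩ <;> rw [h] <;> omega

theorem disjoint_fusionPairs_lowerWedge : Disjoint (fusionPairs j) (lowerWedge j) := by
  rw [Set.disjoint_left]
  rintro ⟨x, y⟩ ⟨-, -, hband, -⟩ ⟨hlow, -⟩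
  dsimp only at hband hlow
  have := le_abs_self (x - y)
  omega

theorem disjoint_fusionPairs_union_lowerWedge_upperWedge (hj : 0 ≤ j) :
    Disjoint (fusionPairs j ∪ lowerWedge j) (upperWedge j) := by
  rw [Set.disjoint_left]
  rintro ⟨x, y⟩ (⟨-, -, hband, -⟩ | ⟨hlow, -⟩) ⟨-, hup, -⟩
  · dsimp only at hband hup
    have := neg_abs_le (x - y)
    omega
  · omega

theorem neg_right_mem_lowerWedge {x y : ℤ} (h : (x, y) ∈ lowerWedge j) :
    (x, -y) ∈ lowerWedge j := by
  simp only [lowerWedge, Set.mem_ofPred_eq, Int.odd_iff] at h ⊢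
  omega

end Regions

theorem tsum_lowerWedge_chiChiTerm (t u : ℂ) (j : ℤ) :
    ∑' q : lowerWedge j, Function.uncurry (chiChiTerm t u) q = 0 := by
  rw [tsum_subtype]
  refine tsum_eq_zero_of_comp_equiv_eq_neg ((Equiv.refl ℤ).prodCongr (Equiv.neg ℤ)) ?_
  rintro ⟨x, y⟩
  change (lowerWedge j).indicator _ (x, -y) = -(lowerWedge j).indicator _ (x, y)
  by_cases h : (x, y) ∈ lowerWedge j
  · rw [Set.indicator_of_mem (neg_right_mem_lowerWedge h), Set.indicator_of_mem h]
    exact chiChiTerm_neg_right t u x y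
  · have h' : (x, -y) ∉ lowerWedge j := fun h' => h (by simpa using neg_right_mem_lowerWedge h')
    rw [Set.indicator_of_notMem h', Set.indicator_of_notMem h, neg_zero]

theorem tsum_oddAntidiagonals_sub_tsum_upperWedge {t u : ℂ} {j : ℤ} (hj : 0 ≤ j)
    (ht : ‖t‖ < 1) (hu : ‖u‖ < 1) :
    ∑' q : oddAntidiagonals j, Function.uncurry (chiChiTerm t u) q -
        ∑' q : upperWedge j, Function.uncurry (chiChiTerm t u) q =
      ∑' q : fusionPairs j, Function.uncurry (chiChiTerm t u) q := by
  have hT : Summable (Function.uncurry (chiChiTerm t u)) :=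
    (summable_norm_chiChiTerm ht hu).of_norm
  rw [oddAntidiagonals_eq_union hj,
    Summable.tsum_union_disjoint (disjoint_fusionPairs_union_lowerWedge_upperWedge hj)
      (hT.subtype _) (hT.subtype _),
    Summable.tsum_union_disjoint disjoint_fusionPairs_lowerWedge (hT.subtype _) (hT.subtype _),
    tsum_lowerWedge_chiChiTerm, add_zero, add_sub_cancel_right]

theorem tsum_tsum_minusIndex_sub_plusIndex {α : Type*} [NormedAddCommGroup α] [CompleteSpace α]
    {f : ℤ × ℤ → α} (hf : Summable f) (j : ℤ) :
    ∑' (m : ℕ) (s : ℕ), (f (minusIndex j (m, s)) - f (plusIndex j (m, s))) =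
      ∑' q : oddAntidiagonals j, f q - ∑' q : upperWedge j, f q := by
  have h₁ : Summable fun p => f (minusIndex j p) := hf.comp_injective minusIndex_injective
  have h₂ : Summable fun p => f (plusIndex j p) := hf.comp_injective plusIndex_injective
  rw [← range_minusIndex, ← range_plusIndex, tsum_range f minusIndex_injective,
    tsum_range f plusIndex_injective, ← h₁.tsum_sub h₂,
    (h₁.sub h₂).tsum_prod' (h₁.sub h₂).prod_factor]

theorem KKterm_sub_KKterm_eq_index (t u : ℂ) (j : ℤ) (m s : ℕ) :
    KKterm t u (j + ↑(2 * m)) (↑s + 1) - KKterm t u (j + ↑(2 * m + 1)) (↑s + 1) =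
      Function.uncurry (chiChiTerm t u) (minusIndex j (m, s)) -
        Function.uncurry (chiChiTerm t u) (plusIndex j (m, s)) := by
  have hsucc : j + ↑(2 * m + 1) = j + ↑(2 * m) + 1 := by push_cast; ring
  rw [hsucc, KKterm_sub_KKterm_succ]
  simp only [minusIndex, plusIndex, Function.uncurry_apply_pair]
  push_cast
  rfl

/-- The left-right Virasoro content of the simple Jones–Temperley–Lieb modules
(eq. Fs-Vir-content-gen). -/
theorem virasoro_content_of_JTL_simples (j : ℤ) (hj : 1 ≤ j)
    (t u : ℂ) (ht : ‖t‖ < 1) (hu : ‖u‖ < 1) :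
    (Summable fun p : ℕ × ℕ => ‖KKterm t u (j + p.1) ((p.2 : ℤ) + 1)‖) ∧
    (∑' i : ℕ, (-1 : ℂ) ^ i * ∑' s : ℕ, KKterm t u (j + i) ((s : ℤ) + 1)) =
      ∑' p : {p : ℤ × ℤ // 1 ≤ p.1 ∧ 1 ≤ p.2 ∧ |p.1 - p.2| + 1 ≤ j ∧
          j ≤ p.1 + p.2 - 1 ∧ Odd (p.1 + p.2 - j)},
        chiChiTerm t u p.1.1 p.1.2 := by
  have hK := summable_norm_KKterm hj ht hu
  have hrow := hK.of_norm.prod_factor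
  have hS : Summable fun i : ℕ => ∑' s : ℕ, KKterm t u (j + i) (↑s + 1) := hK.of_norm.prod
  refine ⟨hK, ?_⟩
  calc _ = ∑' m : ℕ, (∑' s : ℕ, KKterm t u (j + ↑(2 * m)) (↑s + 1) -
          ∑' s : ℕ, KKterm t u (j + ↑(2 * m + 1)) (↑s + 1)) :=
        tsum_neg_one_pow_mul_eq_tsum_sub hS
    _ = ∑' (m : ℕ) (s : ℕ), (Function.uncurry (chiChiTerm t u) (minusIndex j (m, s)) -
          Function.uncurry (chiChiTerm t u) (plusIndex j (m, s))) := by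
        refine tsum_congr fun m => ?_
        rw [← (hrow _).tsum_sub (hrow _)]
        exact tsum_congr (KKterm_sub_KKterm_eq_index t u j m)
    _ = ∑' q : oddAntidiagonals j, Function.uncurry (chiChiTerm t u) q -
          ∑' q : upperWedge j, Function.uncurry (chiChiTerm t u) q :=
        tsum_tsum_minusIndex_sub_plusIndex (summable_norm_chiChiTerm ht hu).of_norm j
    _ = _ := tsum_oddAntidiagonals_sub_tsum_upperWedge (by omega) ht hu
end

section
/- For every complex number q with |q| < 1, the series and the infinite product below converge and ∑_{j=1}^{∞} j · ( q^{j(j-1)/2} - q^{j(j+1)/2} ) = ∏_{n=1}^{∞} (1 - qⁿ)(1 + qⁿ)². -/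
/-!
Abel summation turns the left-hand side into `∑ₘ q^(m(m+1)/2)`, so the theorem is Gauss's
identity `∑ₘ q^(m(m+1)/2) = (q; q)_∞ (-q; q)_∞²`. That identity is the limit `p → ∞` of a finite
form of Jacobi's triple product, obtained by putting `N = 2p + 2` and `x = q⁻ᵖ` in the
`q`-binomial theorem `∏_{j<N} (1 + x qʲ) = ∑ₖ q^(k(k-1)/2) [N, k]_q xᵏ`: the factors with `j < p`
become `q^(j-p) (1 + q^(p-j))`, and the Gaussian binomials `[2p + 2, p + j]_q` tend to
`1 / (q; q)_∞` while staying uniformly bounded, so Tannery's theorem applies.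
-/

open Finset Filter Topology

lemma Nat.add_one_choose_two (k : ℕ) : (k + 1).choose 2 = k.choose 2 + k := by
  rw [Nat.choose_succ_succ', Nat.choose_one_right, add_comm]

lemma Nat.le_add_one_choose_two (m : ℕ) : m ≤ (m + 1).choose 2 := by
  rw [Nat.add_one_choose_two]
  exact Nat.le_add_left m _

section CommRing

variable {R : Type*} [CommRing R]

def gaussBinom (q : R) : ℕ → ℕ → R
  | _, 0 => 1
  | 0, _ + 1 => 0
  | n + 1, k + 1 => gaussBinom q n k + q ^ (k + 1) * gaussBinom q n (k + 1)

-- `(q; q)ₙ`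
def qPochhammer (q : R) (n : ℕ) : R := ∏ i ∈ range n, (1 - q ^ (i + 1))

variable {q : R}

@[simp]
lemma gaussBinom_zero_right (n : ℕ) : gaussBinom q n 0 = 1 := by
  cases n <;> rfl

lemma gaussBinom_succ_succ (n k : ℕ) :
    gaussBinom q (n + 1) (k + 1) = gaussBinom q n k + q ^ (k + 1) * gaussBinom q n (k + 1) :=
  rfl

lemma gaussBinom_eq_zero_of_lt {n k : ℕ} (h : n < k) : gaussBinom q n k = 0 := by
  induction n generalizing k with
  | zero => obtain ⟨k, rfl⟩ := Nat.exists_eq_add_of_lt h; rfl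
  | succ n ih =>
    obtain ⟨k, rfl⟩ := Nat.exists_eq_add_of_lt h
    rw [gaussBinom_succ_succ, ih (by omega), ih (by omega), mul_zero, add_zero]

@[simp]
lemma gaussBinom_self (n : ℕ) : gaussBinom q n n = 1 := by
  induction n with
  | zero => rfl
  | succ n ih => rw [gaussBinom_succ_succ, ih, gaussBinom_eq_zero_of_lt n.lt_succ_self]; ring

lemma qPochhammer_succ (n : ℕ) :
    qPochhammer q (n + 1) = qPochhammer q n * (1 - q ^ (n + 1)) :=
  prod_range_succ _ _

lemma gaussBinom_mul_qPochhammer_mul_qPochhammer (m k : ℕ) :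
    gaussBinom q (m + k) k * qPochhammer q k * qPochhammer q m = qPochhammer q (m + k) := by
  induction k generalizing m with
  | zero => simp [qPochhammer]
  | succ k ihk =>
    induction m with
    | zero => simp [qPochhammer]
    | succ m ihm =>
      have hk := ihk (m + 1)
      rw [add_right_comm, qPochhammer_succ m] at hk
      rw [← add_assoc, qPochhammer_succ k] at ihm
      rw [add_add_add_comm, ← add_assoc, gaussBinom_succ_succ, qPochhammer_succ k,
        qPochhammer_succ m, qPochhammer_succ (m + k + 1)]
      linear_combination (1 - q ^ (k + 1)) * hk + q ^ (k + 1) * (1 - q ^ (m + 1)) * ihm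

theorem prod_one_add_mul_pow_eq_sum_gaussBinom (N : ℕ) (x : R) :
    ∏ j ∈ range N, (1 + x * q ^ j) =
      ∑ k ∈ range (N + 1), q ^ k.choose 2 * gaussBinom q N k * x ^ k := by
  induction N generalizing x with
  | zero => simp
  | succ N ih =>
    set T : ℕ → R := fun k => q ^ k.choose 2 * gaussBinom q N k * (x * q) ^ k with hT
    have hT0 : T 0 = 1 := by simp [hT]
    have hTN : T (N + 1) = 0 := by simp [hT, gaussBinom_eq_zero_of_lt N.lt_succ_self]
    have hshift : ∑ k ∈ range (N + 1), T (k + 1) + 1 = ∑ k ∈ range (N + 1), T k := by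
      rw [← hT0, ← sum_range_succ', sum_range_succ, hTN, add_zero]
    have hterm (k : ℕ) : q ^ (k + 1).choose 2 * gaussBinom q (N + 1) (k + 1) * x ^ (k + 1) =
        x * T k + T (k + 1) := by
      simp only [hT, gaussBinom_succ_succ, Nat.add_one_choose_two]
      ring
    have hprod : ∏ j ∈ range (N + 1), (1 + x * q ^ j) = (∑ k ∈ range (N + 1), T k) * (1 + x) := by
      rw [prod_range_succ', pow_zero, mul_one]
      congr 1
      convert ih (x * q) using 3 with j
      ring
    rw [hprod, sum_range_succ' (fun k => q ^ k.choose 2 * gaussBinom q (N + 1) k * x ^ k),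
      sum_congr rfl fun k _ => hterm k, sum_add_distrib, ← mul_sum]
    simp only [Nat.choose_zero_succ, pow_zero, gaussBinom_zero_right, mul_one]
    linear_combination -hshift

lemma pow_choose_two_mul_prod_one_add_mul_pow {x : R} {p : ℕ} (hx : x * q ^ p = 1) :
    q ^ (p + 1).choose 2 * ∏ j ∈ range p, (1 + x * q ^ j) = ∏ i ∈ range p, (1 + q ^ (i + 1)) := by
  induction p generalizing x with
  | zero => simp
  | succ p ih =>
    rw [prod_range_succ', prod_range_succ (fun i => 1 + q ^ (i + 1)),
      ← ih (x := x * q) (by rw [mul_assoc, ← pow_succ']; exact hx), Nat.add_one_choose_two,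
      pow_add]
    simp only [pow_succ', mul_assoc, pow_zero, mul_one]
    linear_combination (q ^ (p + 1).choose 2 * ∏ j ∈ range p, (1 + x * (q * q ^ j))) * hx

lemma pow_choose_two_mul_prod_range_two_mul_add_two {x : R} {p : ℕ} (hx : x * q ^ p = 1) :
    q ^ (p + 1).choose 2 * ∏ j ∈ range (2 * p + 2), (1 + x * q ^ j) =
      2 * (∏ i ∈ range p, (1 + q ^ (i + 1))) * ∏ i ∈ range (p + 1), (1 + q ^ (i + 1)) := by
  have htop : ∏ i ∈ range (p + 2), (1 + x * q ^ (p + i)) =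
      2 * ∏ i ∈ range (p + 1), (1 + q ^ (i + 1)) := by
    simp only [prod_range_succ' _ (p + 1), pow_add, ← mul_assoc, hx, one_mul, pow_zero]
    ring
  rw [show 2 * p + 2 = p + (p + 2) by ring, prod_range_add, ← mul_assoc,
    pow_choose_two_mul_prod_one_add_mul_pow hx, htop]
  ring

lemma pow_mul_pow_of_mul_pow_eq_one {x : R} {p : ℕ} (hx : x * q ^ p = 1) {a b k : ℕ}
    (h : a = b + p * k) : q ^ a * x ^ k = q ^ b := by
  rw [h, pow_add, pow_mul, mul_assoc, ← mul_pow, mul_comm _ x, hx, one_pow, mul_one]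

end CommRing

section Field

variable {K : Type*} [Field K] {q : K}

lemma qPochhammer_ne_zero (hq : ∀ n, q ^ (n + 1) ≠ 1) (n : ℕ) : qPochhammer q n ≠ 0 :=
  prod_ne_zero_iff.mpr fun i _ => sub_ne_zero.mpr (hq i).symm

lemma gaussBinom_add_eq_div (hq : ∀ n, q ^ (n + 1) ≠ 1) (m k : ℕ) :
    gaussBinom q (m + k) k = qPochhammer q (m + k) / (qPochhammer q k * qPochhammer q m) := by
  rw [eq_div_iff (mul_ne_zero (qPochhammer_ne_zero hq k) (qPochhammer_ne_zero hq m)),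
    ← mul_assoc, gaussBinom_mul_qPochhammer_mul_qPochhammer]

lemma gaussBinom_symm_add (hq : ∀ n, q ^ (n + 1) ≠ 1) (m k : ℕ) :
    gaussBinom q (m + k) k = gaussBinom q (m + k) m := by
  rw [gaussBinom_add_eq_div hq, add_comm m k, gaussBinom_add_eq_div hq,
    mul_comm (qPochhammer q m)]

theorem two_mul_prod_mul_prod_eq_sum_gaussBinom (hq0 : q ≠ 0) (hq : ∀ n, q ^ (n + 1) ≠ 1)
    (p : ℕ) :
    2 * (∏ i ∈ range p, (1 + q ^ (i + 1))) * ∏ i ∈ range (p + 1), (1 + q ^ (i + 1)) =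
      ∑ m ∈ range (p + 2), q ^ (m + 1).choose 2 *
        (gaussBinom q (2 * p + 2) (p + 1 + m) + gaussBinom q (2 * p + 2) (p + 2 + m)) := by
  set x := (q ^ p)⁻¹
  have hx : x * q ^ p = 1 := inv_mul_cancel₀ (pow_ne_zero _ hq0)
  have hupper (m : ℕ) : q ^ (p + 1).choose 2 * (q ^ (p + 1 + m).choose 2 *
      gaussBinom q (2 * p + 2) (p + 1 + m) * x ^ (p + 1 + m)) =
        q ^ (m + 1).choose 2 * gaussBinom q (2 * p + 2) (p + 1 + m) := by
    have hexp : (p + 1).choose 2 + (p + 1 + m).choose 2 = (m + 1).choose 2 + p * (p + 1 + m) := by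
      apply Nat.cast_injective (R := ℚ)
      push_cast [Nat.cast_choose_two]
      ring
    rw [← pow_mul_pow_of_mul_pow_eq_one hx hexp, pow_add]
    ring
  have hlower (m : ℕ) (hm : m ∈ range (p + 1)) : q ^ (p + 1).choose 2 * (q ^ (p - m).choose 2 *
      gaussBinom q (2 * p + 2) (p - m) * x ^ (p - m)) =
        q ^ (m + 1).choose 2 * gaussBinom q (2 * p + 2) (p + 2 + m) := by
    obtain ⟨r, rfl⟩ := Nat.exists_eq_add_of_le (Nat.lt_succ_iff.mp (mem_range.mp hm))
    have hexp : (m + r + 1).choose 2 + r.choose 2 = (m + 1).choose 2 + (m + r) * r := by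
      apply Nat.cast_injective (R := ℚ)
      push_cast [Nat.cast_choose_two]
      ring
    have hsymm : gaussBinom q (2 * (m + r) + 2) r =
        gaussBinom q (2 * (m + r) + 2) (m + r + 2 + m) := by
      rw [show 2 * (m + r) + 2 = (m + r + 2 + m) + r by ring, gaussBinom_symm_add hq]
    rw [Nat.add_sub_cancel_left, ← pow_mul_pow_of_mul_pow_eq_one hx hexp, pow_add, hsymm]
    ring
  have hvanish : gaussBinom q (2 * p + 2) (p + 2 + (p + 1)) = 0 :=
    gaussBinom_eq_zero_of_lt (by omega)
  rw [← pow_choose_two_mul_prod_range_two_mul_add_two hx, prod_one_add_mul_pow_eq_sum_gaussBinom,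
    show 2 * p + 2 + 1 = (p + 1) + (p + 2) by ring, sum_range_add, ← sum_range_reflect _ (p + 1),
    mul_add, mul_sum, mul_sum, sum_congr rfl fun m _ => hupper m]
  simp only [Nat.add_sub_cancel, sum_congr rfl hlower, mul_add, sum_add_distrib,
    sum_range_succ _ (p + 1), hvanish, mul_zero, add_zero]
  ring

end Field

lemma hasSum_natCast_add_one_mul_sub {R : Type*} [Ring R] [TopologicalSpace R]
    [IsTopologicalRing R] {a : ℕ → R} (ha : Summable a)
    (hna : Summable fun i : ℕ => (i : R) * a i) :
    HasSum (fun i : ℕ => ((i : R) + 1) * (a i - a (i + 1))) (∑' i, a i) := by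
  have hsucc : HasSum (fun i => ((i + 1 : ℕ) : R) * a (i + 1)) (∑' i : ℕ, (i : R) * a i) := by
    simpa using (hasSum_nat_add_iff' 1).mpr hna.hasSum
  have h := (hna.hasSum.add ha.hasSum).sub hsucc
  rw [add_sub_cancel_left] at h
  refine h.congr_fun fun i => ?_
  push_cast
  noncomm_ring

section Analysis

variable {𝕜 : Type*} [NormedField 𝕜] {q : 𝕜}

lemma pow_succ_ne_one_of_norm_lt_one (hq : ‖q‖ < 1) (n : ℕ) : q ^ (n + 1) ≠ 1 := fun h => by
  have := pow_lt_one₀ (norm_nonneg q) hq n.succ_ne_zero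
  rw [← norm_pow, h, norm_one] at this
  exact lt_irrefl 1 this

lemma summable_norm_pow_succ (hq : ‖q‖ < 1) : Summable fun n => ‖q ^ (n + 1)‖ := by
  simpa [norm_pow] using
    (summable_nat_add_iff 1).mpr (summable_geometric_of_lt_one (norm_nonneg q) hq)

lemma norm_pow_choose_two_le (hq : ‖q‖ < 1) (m : ℕ) : ‖q ^ (m + 1).choose 2‖ ≤ ‖q‖ ^ m := by
  rw [norm_pow]
  exact pow_le_pow_of_le_one (norm_nonneg q) hq.le (Nat.le_add_one_choose_two m)

variable [CompleteSpace 𝕜]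

lemma multipliable_one_add_pow_succ (hq : ‖q‖ < 1) :
    Multipliable fun n => 1 + q ^ (n + 1) :=
  multipliable_one_add_of_summable (summable_norm_pow_succ hq)

lemma multipliable_one_sub_pow_succ (hq : ‖q‖ < 1) :
    Multipliable fun n => 1 - q ^ (n + 1) := by
  simpa [sub_eq_add_neg] using multipliable_one_add_of_summable (f := fun n => -q ^ (n + 1))
    (by simpa using summable_norm_pow_succ hq)

lemma tprod_one_sub_pow_succ_ne_zero (hq : ‖q‖ < 1) : ∏' n, (1 - q ^ (n + 1)) ≠ 0 := by
  simpa [sub_eq_add_neg] using tprod_one_add_ne_zero_of_summable (f := fun n => -q ^ (n + 1))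
    (fun n => by
      simpa [← sub_eq_add_neg, sub_eq_zero] using (pow_succ_ne_one_of_norm_lt_one hq n).symm)
    (by simpa using summable_norm_pow_succ hq)

lemma tendsto_qPochhammer (hq : ‖q‖ < 1) :
    Tendsto (qPochhammer q) atTop (𝓝 (∏' n, (1 - q ^ (n + 1)))) :=
  (multipliable_one_sub_pow_succ hq).hasProd.tendsto_prod_nat

lemma summable_pow_choose_two (hq : ‖q‖ < 1) : Summable fun m => q ^ (m + 1).choose 2 :=
  .of_norm_bounded (summable_geometric_of_lt_one (norm_nonneg q) hq) (norm_pow_choose_two_le hq)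

lemma summable_natCast_mul_pow_choose_two (hq : ‖q‖ < 1) :
    Summable fun m : ℕ => (m : 𝕜) * q ^ (m + 1).choose 2 := by
  refine .of_norm_bounded
    (summable_pow_mul_geometric_of_norm_lt_one 1 (r := ‖q‖) (by simpa using hq)) fun m => ?_
  rw [norm_mul, pow_one]
  exact mul_le_mul ((Nat.norm_cast_le m).trans_eq (by rw [norm_one, mul_one]))
    (norm_pow_choose_two_le hq m) (norm_nonneg _) (Nat.cast_nonneg m)

lemma exists_norm_gaussBinom_le (hq : ‖q‖ < 1) : ∃ C, ∀ N k, ‖gaussBinom q N k‖ ≤ C := by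
  have hE := tendsto_qPochhammer hq
  obtain ⟨B, hB⟩ := isBounded_iff_forall_norm_le.mp (Metric.isBounded_range_of_tendsto _ hE)
  obtain ⟨B', hB'⟩ := isBounded_iff_forall_norm_le.mp
    (Metric.isBounded_range_of_tendsto _ (hE.inv₀ (tprod_one_sub_pow_succ_ne_zero hq)))
  have hE_le (n : ℕ) : ‖qPochhammer q n‖ ≤ B := hB _ ⟨n, rfl⟩
  have hE_inv_le (n : ℕ) : ‖(qPochhammer q n)⁻¹‖ ≤ B' := hB' _ ⟨n, rfl⟩
  have hB0 : 0 ≤ B := (norm_nonneg _).trans (hE_le 0)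
  have hB'0 : 0 ≤ B' := (norm_nonneg _).trans (hE_inv_le 0)
  refine ⟨B * (B' * B'), fun N k => ?_⟩
  rcases lt_or_ge N k with hNk | hkN
  · rw [gaussBinom_eq_zero_of_lt hNk, norm_zero]
    exact mul_nonneg hB0 (mul_nonneg hB'0 hB'0)
  · obtain ⟨m, rfl⟩ := Nat.exists_eq_add_of_le' hkN
    rw [gaussBinom_add_eq_div (pow_succ_ne_one_of_norm_lt_one hq), div_eq_mul_inv, mul_inv,
      norm_mul, norm_mul]
    exact mul_le_mul (hE_le _) (mul_le_mul (hE_inv_le _) (hE_inv_le _) (norm_nonneg _) hB'0)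
      (by positivity) hB0

lemma tendsto_gaussBinom {α : Type*} {l : Filter α} {N k : α → ℕ} (hq : ‖q‖ < 1)
    (hk : Tendsto k l atTop) (hNk : Tendsto (fun i => N i - k i) l atTop) :
    Tendsto (fun i => gaussBinom q (N i) (k i)) l (𝓝 (∏' n, (1 - q ^ (n + 1)))⁻¹) := by
  have hE := tendsto_qPochhammer hq
  have hE0 := tprod_one_sub_pow_succ_ne_zero hq
  have hN : Tendsto N l atTop := tendsto_atTop_mono (fun i => Nat.sub_le (N i) (k i)) hNk
  have hlim := (hE.comp hN).div ((hE.comp hk).mul (hE.comp hNk)) (mul_ne_zero hE0 hE0)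
  rw [div_mul_cancel_left₀ hE0] at hlim
  refine hlim.congr' ?_
  filter_upwards [hNk.eventually_ge_atTop 1] with i hi
  obtain ⟨m, hm⟩ := Nat.exists_eq_add_of_le' (show k i ≤ N i by omega)
  simp only [Pi.div_apply, Function.comp_apply, hm, Nat.add_sub_cancel,
    gaussBinom_add_eq_div (pow_succ_ne_one_of_norm_lt_one hq)]

lemma tendsto_gaussBinom_two_mul_add_two (hq : ‖q‖ < 1) (j : ℕ) :
    Tendsto (fun p => gaussBinom q (2 * p + 2) (p + j)) atTop
      (𝓝 (∏' n, (1 - q ^ (n + 1)))⁻¹) :=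
  tendsto_gaussBinom hq (tendsto_atTop_mono (fun p => Nat.le_add_right p j) tendsto_id)
    (tendsto_atTop_mono (fun p => by omega) (tendsto_sub_atTop_nat j))

lemma tendsto_tsum_pow_choose_two_mul_gaussBinom (hq : ‖q‖ < 1) :
    Tendsto (fun p => ∑' m, q ^ (m + 1).choose 2 *
        (gaussBinom q (2 * p + 2) (p + 1 + m) + gaussBinom q (2 * p + 2) (p + 2 + m))) atTop
      (𝓝 (∑' m, q ^ (m + 1).choose 2 *
        ((∏' n, (1 - q ^ (n + 1)))⁻¹ + (∏' n, (1 - q ^ (n + 1)))⁻¹))) := by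
  obtain ⟨C, hC⟩ := exists_norm_gaussBinom_le hq
  have hC0 : 0 ≤ C := (norm_nonneg _).trans (hC 0 0)
  refine tendsto_tsum_of_dominated_convergence (bound := fun m => ‖q‖ ^ m * (C + C))
    ((summable_geometric_of_lt_one (norm_nonneg q) hq).mul_right _) (fun m => ?_)
    (.of_forall fun p m => ?_)
  · simp only [add_assoc]
    exact tendsto_const_nhds.mul ((tendsto_gaussBinom_two_mul_add_two hq _).add
      (tendsto_gaussBinom_two_mul_add_two hq _))
  · rw [norm_mul]
    exact mul_le_mul (norm_pow_choose_two_le hq m)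
      ((norm_add_le _ _).trans (add_le_add (hC _ _) (hC _ _))) (norm_nonneg _) (by positivity)

theorem tsum_pow_choose_two [CharZero 𝕜] (hq : ‖q‖ < 1) :
    ∑' m, q ^ (m + 1).choose 2 = (∏' n, (1 - q ^ (n + 1))) * (∏' n, (1 + q ^ (n + 1))) ^ 2 := by
  rcases eq_or_ne q 0 with rfl | hq0
  · rw [tsum_eq_single 0 fun m hm => zero_pow (by have := Nat.le_add_one_choose_two m; omega)]
    simp
  have hP : Tendsto (fun p => ∏ i ∈ range p, (1 + q ^ (i + 1))) atTop
      (𝓝 (∏' n, (1 + q ^ (n + 1)))) :=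
    (multipliable_one_add_pow_succ hq).hasProd.tendsto_prod_nat
  have hfinite (p : ℕ) : ∑' m, q ^ (m + 1).choose 2 *
      (gaussBinom q (2 * p + 2) (p + 1 + m) + gaussBinom q (2 * p + 2) (p + 2 + m)) =
      2 * (∏ i ∈ range p, (1 + q ^ (i + 1))) * ∏ i ∈ range (p + 1), (1 + q ^ (i + 1)) := by
    rw [two_mul_prod_mul_prod_eq_sum_gaussBinom hq0 (pow_succ_ne_one_of_norm_lt_one hq)]
    refine tsum_eq_sum fun m hm => ?_
    rw [mem_range, not_lt] at hm
    rw [gaussBinom_eq_zero_of_lt (by omega), gaussBinom_eq_zero_of_lt (by omega), add_zero,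
      mul_zero]
  have hlim := tendsto_tsum_pow_choose_two_mul_gaussBinom hq
  simp only [hfinite] at hlim
  have h := tendsto_nhds_unique hlim
    ((tendsto_const_nhds.mul hP).mul ((tendsto_add_atTop_iff_nat 1).mpr hP))
  rw [tsum_mul_right] at h
  field_simp at h
  rw [div_eq_iff (tprod_one_sub_pow_succ_ne_zero hq)] at h
  linear_combination h / 2

end Analysis

/-- `∑_{j≥1} j (q^{j(j-1)/2} - q^{j(j+1)/2}) = ∏_{n≥1} (1-qⁿ)(1+qⁿ)²`:
the generating function of levels of periodic symplectic fermions. -/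
theorem periodic_symplectic_fermion_generating_function (q : ℂ) (hq : ‖q‖ < 1) :
    (Summable fun i : ℕ =>
      ((i : ℂ) + 1) * (q ^ ((i + 1) * i / 2) - q ^ ((i + 1) * (i + 2) / 2))) ∧
    (Multipliable fun n : ℕ => (1 - q ^ (n + 1)) * (1 + q ^ (n + 1)) ^ 2) ∧
    (∑' i : ℕ, ((i : ℂ) + 1) * (q ^ ((i + 1) * i / 2) - q ^ ((i + 1) * (i + 2) / 2))) =
      ∏' n : ℕ, (1 - q ^ (n + 1)) * (1 + q ^ (n + 1)) ^ 2 := by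
  have hexp (i : ℕ) :
      (i + 1) * i / 2 = (i + 1).choose 2 ∧ (i + 1) * (i + 2) / 2 = (i + 2).choose 2 := by
    simp [Nat.choose_two_right, mul_comm]
  simp only [hexp]
  have hsum := hasSum_natCast_add_one_mul_sub (summable_pow_choose_two hq)
    (summable_natCast_mul_pow_choose_two hq)
  have hE := multipliable_one_sub_pow_succ hq
  have hP := multipliable_one_add_pow_succ hq
  refine ⟨hsum.summable, hE.mul (hP.pow 2), ?_⟩
  rw [hsum.tsum_eq, hE.tprod_mul (hP.pow 2), hP.tprod_pow, tsum_pow_choose_two hq]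
end
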